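/- arXiv:2007.14263 — 13 statements merged into one kernel-verified Lean document; each statement's English description precedes it below -/
import Mathlib

section
/- Let C be a locally small category in which all morphisms are mono, and let A be an object of C. Then the Ramsey degree t_C(A) (for colorings of hom-sets) is finite if and only if both the Ramsey degree for objects t~_C(A) and the automorphism group Aut(A) are finite, and in that case t_C(A) = |Aut(A)| · t~_C(A). -/
/-!
Since every morphism out of `A` is mono, `Aut A` acts freely by precomposition on each `A ⟶ Z`.
Choosing a representative of every orbit splits `A ⟶ Z` as `binom(Z, A) × Aut A`, and for
`w : B ⟶ Z` the set of composites `f ≫ w` is a union of whole orbits, hence corresponds to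
(its classes) `× Aut A`. Colouring a morphism by its Aut-coordinate alone shows `|Aut A| ≤ t`
whenever `t` bounds the Ramsey degree, so `Aut A` is finite. Colouring a morphism by
(the colour of its class, its Aut-coordinate) turns a bound `t` on morphisms into the bound
`t / |Aut A|` on classes; colouring a class by the colours of all morphisms in its orbit
turns a bound `t` on classes into the bound `|Aut A| * t` on morphisms.
-/

open CategoryTheory

universe v u v' u'

def RamseyArrow (C : Type u) [Category.{v} C] (A B Z : C) (k t : ℕ) : Prop :=
  ∀ χ : (A ⟶ Z) → Fin k, ∃ w : B ⟶ Z,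
    (Set.range fun f : A ⟶ B => χ (f ≫ w)).ncard ≤ t

noncomputable def ramseyDeg (C : Type u) [Category.{v} C] (A : C) : ℕ∞ :=
  sInf {n : ℕ∞ | ∃ m : ℕ, n = (m : ℕ∞) ∧ 1 ≤ m ∧
    ∀ k : ℕ, 2 ≤ k → ∀ B : C, ∃ Z : C, RamseyArrow C A B Z k m}

def objRel (C : Type u) [Category.{v} C] (A X : C) : (A ⟶ X) → (A ⟶ X) → Prop :=
  fun f f' => ∃ α : Aut A, f' = α.hom ≫ f

def ObjRamseyArrow (C : Type u) [Category.{v} C] (A B Z : C) (k t : ℕ) : Prop :=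
  ∀ χ : Quot (objRel C A Z) → Fin k, ∃ w : B ⟶ Z,
    (Set.range fun f : A ⟶ B => χ (Quot.mk _ (f ≫ w))).ncard ≤ t

noncomputable def objRamseyDeg (C : Type u) [Category.{v} C] (A : C) : ℕ∞ :=
  sInf {n : ℕ∞ | ∃ m : ℕ, n = (m : ℕ∞) ∧ 1 ≤ m ∧
    ∀ k : ℕ, 2 ≤ k → ∀ B : C, ∃ Z : C, ObjRamseyArrow C A B Z k m}

section NatSInf

variable {p : ℕ → Prop}

lemma sInf_natCast_setOf_eq_find [DecidablePred p] (h : ∃ m, p m) :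
    sInf {n : ℕ∞ | ∃ m : ℕ, n = m ∧ p m} = Nat.find h :=
  le_antisymm (sInf_le ⟨_, rfl, Nat.find_spec h⟩)
    (le_sInf fun _ ⟨_, hn, hm⟩ => hn ▸ by exact_mod_cast Nat.find_min' h hm)

lemma sInf_natCast_setOf_eq_top (h : ¬∃ m, p m) :
    sInf {n : ℕ∞ | ∃ m : ℕ, n = m ∧ p m} = ⊤ :=
  sInf_eq_top.2 fun _ ⟨m, _, hm⟩ => (h ⟨m, hm⟩).elim

lemma exists_of_sInf_natCast_setOf_ne_top (h : sInf {n : ℕ∞ | ∃ m : ℕ, n = m ∧ p m} ≠ ⊤) :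
    ∃ m, p m :=
  not_not.1 fun hp => h (sInf_natCast_setOf_eq_top hp)

lemma sInf_natCast_setOf_eq_mul {P Q : ℕ → Prop} {a : ℕ} (ha : 0 < a)
    (hPQ : ∀ m, P m → Q (m / a)) (hQP : ∀ t, Q t → P (a * t)) :
    sInf {n : ℕ∞ | ∃ m : ℕ, n = m ∧ P m} =
      a * sInf {n : ℕ∞ | ∃ m : ℕ, n = m ∧ Q m} := by
  classical
  by_cases hP : ∃ m, P m
  · have hQ : ∃ t, Q t := ⟨_, hPQ _ (Nat.find_spec hP)⟩
    rw [sInf_natCast_setOf_eq_find hP, sInf_natCast_setOf_eq_find hQ]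
    norm_cast
    refine le_antisymm (Nat.find_min' hP (hQP _ (Nat.find_spec hQ))) ?_
    calc a * Nat.find hQ ≤ a * (Nat.find hP / a) :=
          Nat.mul_le_mul_left a (Nat.find_min' hQ (hPQ _ (Nat.find_spec hP)))
      _ ≤ Nat.find hP := Nat.mul_div_le _ a
  · have hQ : ¬∃ t, Q t := fun ⟨t, ht⟩ => hP ⟨_, hQP t ht⟩
    rw [sInf_natCast_setOf_eq_top hP, sInf_natCast_setOf_eq_top hQ,
      ENat.mul_top (by exact_mod_cast ha.ne')]

end NatSInf

section Colorings

variable {C : Type u} [Category.{v} C] {A B Z : C} {k t : ℕ} {X : Type*}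

lemma RamseyArrow.exists_ncard_range_le (h : RamseyArrow C A B Z k t) (e : X ↪ Fin k)
    (χ : (A ⟶ Z) → X) : ∃ w : B ⟶ Z, (Set.range fun f : A ⟶ B => χ (f ≫ w)).ncard ≤ t := by
  obtain ⟨w, hw⟩ := h (e ∘ χ)
  refine ⟨w, ?_⟩
  rwa [← Set.ncard_image_of_injective _ e.injective, ← Set.range_comp]

lemma ObjRamseyArrow.exists_ncard_range_le (h : ObjRamseyArrow C A B Z k t) (e : X ↪ Fin k)
    (χ : Quot (objRel C A Z) → X) :
    ∃ w : B ⟶ Z, (Set.range fun f : A ⟶ B => χ (Quot.mk _ (f ≫ w))).ncard ≤ t := by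
  obtain ⟨w, hw⟩ := h (e ∘ χ)
  refine ⟨w, ?_⟩
  rwa [← Set.ncard_image_of_injective _ e.injective, ← Set.range_comp]

end Colorings

section FreeAction

variable {C : Type u} [Category.{v} C] {A Z : C}

lemma objRel_equivalence : Equivalence (objRel C A Z) where
  refl f := ⟨Iso.refl A, by simp⟩
  symm := by
    rintro f _ ⟨(α : A ≅ A), rfl⟩
    exact ⟨α.symm, by simp⟩
  trans := by
    rintro f _ _ ⟨(α : A ≅ A), rfl⟩ ⟨(β : A ≅ A), rfl⟩
    exact ⟨β ≪≫ α, by simp⟩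

lemma exists_eq_aut_comp_out (g : A ⟶ Z) :
    ∃ α : Aut A, g = α.hom ≫ (Quot.mk (objRel C A Z) g).out :=
  objRel_equivalence.eqvGen_iff.1 (Quot.eq.1 (Quot.out_eq _))

lemma quot_mk_aut_comp (β : Aut A) (g : A ⟶ Z) :
    Quot.mk (objRel C A Z) (β.hom ≫ g) = Quot.mk _ g :=
  (Quot.sound ⟨β, rfl⟩).symm

noncomputable def autCoord (g : A ⟶ Z) : Aut A := (exists_eq_aut_comp_out g).choose

lemma autCoord_spec (g : A ⟶ Z) : g = (autCoord g).hom ≫ (Quot.mk (objRel C A Z) g).out :=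
  (exists_eq_aut_comp_out g).choose_spec

lemma autCoord_eq_of_eq_comp (hA : ∀ {Y : C} (f : A ⟶ Y), Mono f) {g : A ⟶ Z} {α : Aut A}
    (h : g = α.hom ≫ (Quot.mk (objRel C A Z) g).out) : autCoord g = α := by
  have := hA (Quot.mk (objRel C A Z) g).out
  exact Iso.ext ((cancel_mono _).1 ((autCoord_spec g).symm.trans h))

lemma autCoord_aut_comp (hA : ∀ {Y : C} (f : A ⟶ Y), Mono f) (β : Aut A) (g : A ⟶ Z) :
    autCoord (β.hom ≫ g) = autCoord g * β := by
  refine autCoord_eq_of_eq_comp hA ?_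
  rw [quot_mk_aut_comp]
  change β.hom ≫ g = (β.hom ≫ (autCoord g).hom) ≫ _
  rw [Category.assoc, ← autCoord_spec]

lemma exists_autCoord_aut_comp_eq (hA : ∀ {Y : C} (f : A ⟶ Y), Mono f) (g : A ⟶ Z) (γ : Aut A) :
    ∃ β : Aut A, autCoord (β.hom ≫ g) = γ :=
  ⟨(autCoord g)⁻¹ * γ, by rw [autCoord_aut_comp hA, mul_inv_cancel_left]⟩

lemma range_prod_autCoord_comp (hA : ∀ {Y : C} (f : A ⟶ Y), Mono f) {X : Type*} {B : C}
    (w : B ⟶ Z) (c : Quot (objRel C A Z) → X) :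
    (Set.range fun f : A ⟶ B => (c (Quot.mk _ (f ≫ w)), autCoord (f ≫ w))) =
      (Set.range fun f : A ⟶ B => c (Quot.mk _ (f ≫ w))) ×ˢ Set.univ := by
  refine subset_antisymm ?_ ?_
  · rintro _ ⟨f, rfl⟩
    exact ⟨⟨f, rfl⟩, trivial⟩
  · rintro ⟨_, α⟩ ⟨⟨f, rfl⟩, -⟩
    obtain ⟨β, hβ⟩ := exists_autCoord_aut_comp_eq hA (f ≫ w) α
    refine ⟨β.hom ≫ f, ?_⟩
    simp only [Category.assoc, hβ, quot_mk_aut_comp]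

end FreeAction

section Degrees

variable {C : Type u} [Category.{v} C] {A : C} {m : ℕ}

lemma card_le_of_ramseyArrow (hA : ∀ {Y : C} (f : A ⟶ Y), Mono f)
    (hm : ∀ k : ℕ, 2 ≤ k → ∀ B : C, ∃ Z : C, RamseyArrow C A B Z k m) (S : Finset (Aut A)) :
    S.card ≤ m := by
  classical
  obtain ⟨Z, hZ⟩ := hm (S.card + 2) (by omega) A
  obtain ⟨e⟩ : Nonempty (Option S ↪ Fin (S.card + 2)) :=
    Function.Embedding.nonempty_of_card_le (by simp)
  let χ : (A ⟶ Z) → Option S := fun g => if h : autCoord g ∈ S then some ⟨_, h⟩ else none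
  obtain ⟨w, hw⟩ := hZ.exists_ncard_range_le e χ
  have hsub : Set.range (some : S → Option S) ⊆ Set.range fun f : A ⟶ A => χ (f ≫ w) := by
    rintro _ ⟨⟨α, hα⟩, rfl⟩
    obtain ⟨β, hβ⟩ := exists_autCoord_aut_comp_eq hA w α
    exact ⟨β.hom, by simp only [χ, hβ, dif_pos hα]⟩
  calc S.card = (Set.range (some : S → Option S)).ncard := by
        rw [Set.ncard_range_of_injective (Option.some_injective _), Nat.card_eq_fintype_card,
          Fintype.card_coe]
    _ ≤ _ := Set.ncard_le_ncard hsub (Set.toFinite _)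
    _ ≤ m := hw

lemma finite_aut_of_ramseyArrow (hA : ∀ {Y : C} (f : A ⟶ Y), Mono f)
    (hm : ∀ k : ℕ, 2 ≤ k → ∀ B : C, ∃ Z : C, RamseyArrow C A B Z k m) : Finite (Aut A) := by
  by_contra h
  rw [not_finite_iff_infinite] at h
  obtain ⟨S, hS⟩ := Infinite.exists_subset_card_eq (Aut A) (m + 1)
  have := card_le_of_ramseyArrow hA hm S
  omega

lemma natCard_aut_le_of_ramseyArrow (hA : ∀ {Y : C} (f : A ⟶ Y), Mono f) [Finite (Aut A)]
    (hm : ∀ k : ℕ, 2 ≤ k → ∀ B : C, ∃ Z : C, RamseyArrow C A B Z k m) : Nat.card (Aut A) ≤ m := by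
  have := Fintype.ofFinite (Aut A)
  rw [Nat.card_eq_fintype_card]
  exact card_le_of_ramseyArrow hA hm Finset.univ

lemma objRamseyArrow_of_ramseyArrow (hA : ∀ {Y : C} (f : A ⟶ Y), Mono f) [Finite (Aut A)]
    (hm : ∀ k : ℕ, 2 ≤ k → ∀ B : C, ∃ Z : C, RamseyArrow C A B Z k m)
    (k : ℕ) (hk : 2 ≤ k) (B : C) :
    ∃ Z : C, ObjRamseyArrow C A B Z k (m / Nat.card (Aut A)) := by
  have ha : 0 < Nat.card (Aut A) := Nat.card_pos
  obtain ⟨Z, hZ⟩ := hm (k * Nat.card (Aut A)) (hk.trans (Nat.le_mul_of_pos_right k ha)) B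
  refine ⟨Z, fun χ => ?_⟩
  let e : Fin k × Aut A ↪ Fin (k * Nat.card (Aut A)) :=
    (((Equiv.refl _).prodCongr (Finite.equivFin (Aut A))).trans finProdFinEquiv).toEmbedding
  obtain ⟨w, hw⟩ := hZ.exists_ncard_range_le e fun g => (χ (Quot.mk _ g), autCoord g)
  refine ⟨w, (Nat.le_div_iff_mul_le ha).2 ?_⟩
  rwa [range_prod_autCoord_comp hA, Set.ncard_prod, Set.ncard_univ] at hw

lemma ramseyArrow_of_objRamseyArrow (hA : ∀ {Y : C} (f : A ⟶ Y), Mono f) [Finite (Aut A)]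
    (hm : ∀ k : ℕ, 2 ≤ k → ∀ B : C, ∃ Z : C, ObjRamseyArrow C A B Z k m)
    (k : ℕ) (hk : 2 ≤ k) (B : C) :
    ∃ Z : C, RamseyArrow C A B Z k (Nat.card (Aut A) * m) := by
  have ha : 0 < Nat.card (Aut A) := Nat.card_pos
  obtain ⟨Z, hZ⟩ := hm (k ^ Nat.card (Aut A)) (hk.trans (Nat.le_self_pow ha.ne' k)) B
  refine ⟨Z, fun χ => ?_⟩
  let e : (Aut A → Fin k) ↪ Fin (k ^ Nat.card (Aut A)) :=
    (((Finite.equivFin (Aut A)).arrowCongr (Equiv.refl _)).trans finFunctionFinEquiv).toEmbedding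
  let Φ : Quot (objRel C A Z) → Aut A → Fin k := fun q α => χ (α.hom ≫ q.out)
  obtain ⟨w, hw⟩ := hZ.exists_ncard_range_le e Φ
  have hrange : (Set.range fun f : A ⟶ B => χ (f ≫ w)) = (fun p => p.1 p.2) ''
      Set.range fun f : A ⟶ B => (Φ (Quot.mk _ (f ≫ w)), autCoord (f ≫ w)) := by
    rw [← Set.range_comp]
    exact congrArg Set.range (funext fun f => congrArg χ (autCoord_spec (f ≫ w)))
  refine ⟨w, ?_⟩
  calc (Set.range fun f : A ⟶ B => χ (f ≫ w)).ncard
      ≤ (Set.range fun f : A ⟶ B => (Φ (Quot.mk _ (f ≫ w)), autCoord (f ≫ w))).ncard :=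
        hrange ▸ Set.ncard_image_le (Set.toFinite _)
    _ = (Set.range fun f : A ⟶ B => Φ (Quot.mk _ (f ≫ w))).ncard * Nat.card (Aut A) := by
        rw [range_prod_autCoord_comp hA, Set.ncard_prod, Set.ncard_univ]
    _ ≤ Nat.card (Aut A) * m := by rw [mul_comm]; exact Nat.mul_le_mul_left _ hw

end Degrees

theorem stmt0 {C : Type u} [Category.{v} C]
    (hmono : ∀ {X Y : C} (f : X ⟶ Y), Mono f) (A : C) :
    (ramseyDeg C A ≠ ⊤ ↔ objRamseyDeg C A ≠ ⊤ ∧ Finite (Aut A)) ∧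
    (ramseyDeg C A ≠ ⊤ →
      ramseyDeg C A = (Nat.card (Aut A) : ℕ∞) * objRamseyDeg C A) := by
  have hA : ∀ {Y : C} (f : A ⟶ Y), Mono f := fun f => hmono f
  have finite_aut : ramseyDeg C A ≠ ⊤ → Finite (Aut A) := fun h =>
    let ⟨_, _, hm⟩ := exists_of_sInf_natCast_setOf_ne_top h
    finite_aut_of_ramseyArrow hA hm
  have deg_eq (_ : Finite (Aut A)) :
      ramseyDeg C A = Nat.card (Aut A) * objRamseyDeg C A :=
    sInf_natCast_setOf_eq_mul Nat.card_pos
      (fun _ ⟨_, hm⟩ => ⟨(Nat.one_le_div_iff Nat.card_pos).2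
        (natCard_aut_le_of_ramseyArrow hA hm), objRamseyArrow_of_ramseyArrow hA hm⟩)
      (fun _ ⟨ht, hm⟩ => ⟨Nat.mul_pos Nat.card_pos ht, ramseyArrow_of_objRamseyArrow hA hm⟩)
  refine ⟨⟨fun h => ⟨fun ho => ?_, finite_aut h⟩, fun ⟨ho, hfin⟩ => ?_⟩,
    fun h => deg_eq (finite_aut h)⟩
  · have := finite_aut h
    rw [deg_eq this, ho, ENat.mul_top (by exact_mod_cast Nat.card_pos.ne')] at h
    exact h rfl
  · rw [deg_eq hfin]
    exact WithTop.mul_ne_top (ENat.natCast_ne_top _) ho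
end

section
/- Let C be a locally small category in which all morphisms are mono, and let A be an object of C. If the Ramsey degree t_C(A) is finite, then t_C(A) ≥ |Aut(A)|; in particular, if t_C(A) = 1 then A is rigid (its only automorphism is the identity). -/
/-
Since every morphism is mono, `Aut A` acts freely on `hom(A, Z)` by precomposition, so after
choosing a representative `r` in each orbit every `f : A ⟶ Z` is uniquely `β_f ≫ r` with
`β_f ∈ Aut A`, and `β_(α ≫ f) = α ≫ β_f`. For a finite `s ⊆ Aut A`, colour `Aut A` with finitely
many colours so that all translates `s ≫ β` are rainbow (a greedy colouring of a Cayley graph of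
bounded degree, extended to the infinite group by compactness), and colour `f` by the colour of
`β_f`. Then for every `w : A ⟶ Z` the morphisms `α ≫ w`, `α ∈ s`, get `|s|` distinct colours, so
no Ramsey degree of `A` is below `|s|`.
-/

open CategoryTheory

universe v u v' u'

namespace SimpleGraph

variable {V : Type*} (G : SimpleGraph V) {k : ℕ}

theorem exists_coloring_on_finset_of_neighborSet_subset_card_lt
    (hdeg : ∀ v, ∃ N : Finset V, G.neighborSet v ⊆ N ∧ N.card < k) (t : Finset V) :
    ∃ c : V → Fin k, ∀ x ∈ t, ∀ y ∈ t, G.Adj x y → c x ≠ c y := by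
  classical
  induction t using Finset.induction with
  | empty =>
    rcases isEmpty_or_nonempty V with hV | ⟨⟨v⟩⟩
    · exact ⟨isEmptyElim, by simp⟩
    · obtain ⟨N, -, hN⟩ := hdeg v
      exact ⟨fun _ => ⟨0, by omega⟩, by simp⟩
  | @insert a t ha ih =>
    obtain ⟨c, hc⟩ := ih
    obtain ⟨N, hN, hNk⟩ := hdeg a
    obtain ⟨i, -, hi⟩ := Finset.exists_mem_notMem_of_card_lt_card
      (s := N.image c) (t := Finset.univ) (by simpa using Finset.card_image_le.trans_lt hNk)
    have hfresh : ∀ y ∈ t, G.Adj a y → i ≠ c y := fun y _ hay hiy =>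
      hi (hiy ▸ Finset.mem_image_of_mem c (hN hay))
    have hne : ∀ z ∈ t, z ≠ a := fun z hz h => ha (h ▸ hz)
    refine ⟨Function.update c a i, fun x hx y hy hxy => ?_⟩
    rcases Finset.mem_insert.mp hx with hxa | hxt <;> rcases Finset.mem_insert.mp hy with hya | hyt
    · exact (G.ne_of_adj hxy (hxa.trans hya.symm)).elim
    · subst hxa
      simpa [hne y hyt] using hfresh y hyt hxy
    · subst hya
      simpa [hne x hxt] using (hfresh x hxt hxy.symm).symm
    · simpa [hne x hxt, hne y hyt] using hc x hxt y hyt hxy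

theorem colorable_of_neighborSet_subset_card_lt
    (hdeg : ∀ v, ∃ N : Finset V, G.neighborSet v ⊆ N ∧ N.card < k) : G.Colorable k :=
  nonempty_hom_of_forall_finite_subgraph_hom fun G' hG' =>
    have hc := G.exists_coloring_on_finset_of_neighborSet_subset_card_lt hdeg hG'.toFinset
    Coloring.mk (fun v => hc.choose v) fun {u v} huv =>
      hc.choose_spec _ (hG'.mem_toFinset.mpr u.2) _ (hG'.mem_toFinset.mpr v.2) (G'.adj_sub huv)

end SimpleGraph

open Pointwise SimpleGraph in
theorem exists_coloring_injOn_smul_finset {G : Type*} [Group G] [DecidableEq G] (s : Finset G)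
    {k : ℕ} (hk : s.card * s.card < k) :
    ∃ c : G → Fin k, ∀ γ : G, Set.InjOn (fun a => c (γ * a)) s := by
  have hsymm : (s⁻¹ * s)⁻¹ = s⁻¹ * s := by simp [mul_inv_rev]
  have hdeg : ∀ v, (mulCayley (↑(s⁻¹ * s) : Set G)).neighborSet v ⊆ ↑(v • (s⁻¹ * s)) := by
    intro v u hvu
    rcases ((mulCayley_adj _ _ _).mp hvu).2 with h | h
    · exact Finset.mem_smul_finset.mpr ⟨_, h, by simp⟩
    · have h' := Finset.inv_mem_inv h
      rw [hsymm, mul_inv_rev, inv_inv] at h'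
      exact Finset.mem_smul_finset.mpr ⟨_, h', by simp⟩
  have hcard : ∀ v : G, (v • (s⁻¹ * s)).card < k := fun v =>
    calc (v • (s⁻¹ * s)).card = (s⁻¹ * s).card := Finset.card_smul_finset v _
      _ ≤ s⁻¹.card * s.card := Finset.card_mul_le
      _ < k := by rwa [Finset.card_inv]
  obtain ⟨c⟩ := (mulCayley (↑(s⁻¹ * s) : Set G)).colorable_of_neighborSet_subset_card_lt
    fun v => ⟨_, hdeg v, hcard v⟩
  refine ⟨c, fun γ a ha b hb hab => ?_⟩
  by_contra hne
  refine c.valid ((mulCayley_adj _ _ _).mpr ⟨fun h => hne (mul_left_cancel h), ?_⟩) hab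
  left
  rw [show (γ * a)⁻¹ * (γ * b) = a⁻¹ * b by group, Finset.mem_coe]
  exact Finset.mul_mem_mul (Finset.inv_mem_inv ha) hb

theorem MulAction.exists_equivariant_of_free {G X : Type*} [Group G] [MulAction G X]
    (hfree : ∀ (g : G) (x : X), g • x = x → g = 1) :
    ∃ σ : X → G, ∀ (g : G) (x : X), σ (g • x) = g * σ x := by
  let := orbitRel G X
  let rep : X → X := fun x => (⟦x⟧ : Quotient (orbitRel G X)).out
  have hrep : ∀ x, ∃ g : G, g • rep x = x := fun x => Setoid.symm (Quotient.mk_out x)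
  have hrep_smul : ∀ (g : G) x, rep (g • x) = rep x := fun g x =>
    congrArg Quotient.out (Quotient.sound ⟨g, rfl⟩)
  choose σ hσ using hrep
  refine ⟨σ, fun g x => ?_⟩
  have h : σ (g • x) • rep x = (g * σ x) • rep x := by
    rw [mul_smul, hσ x, ← hrep_smul g x, hσ]
  exact (inv_mul_eq_one.mp (hfree ((g * σ x)⁻¹ * σ (g • x)) (rep x)
    (by rw [mul_smul, h, inv_smul_smul]))).symm

section

variable {C : Type u} [Category.{v} C]

instance CategoryTheory.Aut.mulActionHom (X Y : C) : MulAction (Aut X) (X ⟶ Y) where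
  smul α f := α.inv ≫ f
  one_smul f := Category.id_comp f
  mul_smul _ _ f := Category.assoc _ _ f

theorem card_le_of_forall_ramseyArrow (hmono : ∀ {X Y : C} (f : X ⟶ Y), Mono f) (A : C) {m : ℕ}
    (hR : ∀ k : ℕ, 2 ≤ k → ∃ Z : C, RamseyArrow C A A Z k m) (s : Finset (Aut A)) :
    s.card ≤ m := by
  classical
  obtain ⟨c, hc⟩ := exists_coloring_injOn_smul_finset s (k := s.card * s.card + 2) (by omega)
  obtain ⟨Z, hZ⟩ := hR (s.card * s.card + 2) (by omega)
  obtain ⟨σ, hσ⟩ := MulAction.exists_equivariant_of_free (G := Aut A) (X := A ⟶ Z) fun α f h =>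
    inv_eq_one.mp (Aut.ext ((cancel_mono f).mp (h.trans (Category.id_comp f).symm)))
  obtain ⟨w, hw⟩ := hZ fun f => c (σ f)⁻¹
  have hcolor : ∀ α : Aut A, c (σ (α.hom ≫ w))⁻¹ = c ((σ w)⁻¹ * α) := fun α => by
    rw [show α.hom ≫ w = α⁻¹ • w from rfl, hσ, mul_inv_rev, inv_inv]
  calc s.card = ((fun α => c ((σ w)⁻¹ * α)) '' s).ncard := by
        rw [(hc _).ncard_image, Set.ncard_coe_finset]
    _ ≤ (Set.range fun f : A ⟶ A => c (σ (f ≫ w))⁻¹).ncard := by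
        refine Set.ncard_le_ncard ?_ (Set.toFinite _)
        rintro _ ⟨α, -, rfl⟩
        exact ⟨α.hom, hcolor α⟩
    _ ≤ m := hw

theorem exists_ramseyArrow_of_ramseyDeg_ne_top {A : C} (h : ramseyDeg C A ≠ ⊤) :
    ∃ m : ℕ, ramseyDeg C A = m ∧ ∀ k : ℕ, 2 ≤ k → ∀ B : C, ∃ Z : C, RamseyArrow C A B Z k m := by
  have hne : {n : ℕ∞ | ∃ m : ℕ, n = (m : ℕ∞) ∧ 1 ≤ m ∧
      ∀ k : ℕ, 2 ≤ k → ∀ B : C, ∃ Z : C, RamseyArrow C A B Z k m}.Nonempty :=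
    Set.nonempty_iff_ne_empty.mpr fun he => h (by rw [ramseyDeg, he, sInf_empty])
  obtain ⟨m, hm, -, hR⟩ := csInf_mem hne
  exact ⟨m, hm, hR⟩

end

theorem finite_and_natCard_le_of_forall_finset_card_le {α : Type*} {m : ℕ}
    (h : ∀ s : Finset α, s.card ≤ m) : Finite α ∧ Nat.card α ≤ m := by
  have hfinite : Finite α := by
    by_contra hα
    have := not_finite_iff_infinite.mp hα
    obtain ⟨s, hs⟩ := Infinite.exists_subset_card_eq α (m + 1)
    exact absurd (h s) (by omega)
  have := Fintype.ofFinite α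
  exact ⟨hfinite, by simpa [Nat.card_eq_fintype_card] using h Finset.univ⟩

theorem stmt1 {C : Type u} [Category.{v} C]
    (hmono : ∀ {X Y : C} (f : X ⟶ Y), Mono f) (A : C)
    (hfin : ramseyDeg C A ≠ ⊤) :
    Finite (Aut A) ∧ (Nat.card (Aut A) : ℕ∞) ≤ ramseyDeg C A ∧
    (ramseyDeg C A = 1 → ∀ α : Aut A, α = 1) := by
  obtain ⟨m, hdeg, hR⟩ := exists_ramseyArrow_of_ramseyDeg_ne_top hfin
  obtain ⟨hfinite, hcard⟩ := finite_and_natCard_le_of_forall_finset_card_le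
    (card_le_of_forall_ramseyArrow hmono A fun k hk => hR k hk A)
  refine ⟨hfinite, hdeg ▸ by exact_mod_cast hcard, fun h1 α => ?_⟩
  have hm : m = 1 := by exact_mod_cast hdeg.symm.trans h1
  have : Subsingleton (Aut A) := Finite.card_le_one_iff_subsingleton.mp (hm ▸ hcard)
  exact Subsingleton.elim α 1
end

section
/- Let C₁ and C₂ be categories whose morphisms are all mono, such that all hom-sets in each Cᵢ are finite and every object of each Cᵢ has finite Ramsey degree. Then for all objects A₁ of C₁ and A₂ of C₂, the Ramsey degree of (A₁,A₂) in the product category C₁ × C₂ satisfies t_{C₁×C₂}(A₁,A₂) ≤ t_{C₁}(A₁) · t_{C₂}(A₂). -/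
/-!
Given `χ` on `hom((A₁, A₂), (Z₁, Z₂)) = hom(A₁, Z₁) × hom(A₂, Z₂)`, colour `h : A₁ ⟶ Z₁` by the
whole row `g ↦ χ (h, g)`; this is a colouring with finitely many colours, so a copy `w₁` of `B₁`
in `Z₁` carries at most `t₁ = t(A₁)` rows. Then colour `g : A₂ ⟶ Z₂` by the column
`f ↦ χ (f ≫ w₁, g)` and find a copy `w₂` of `B₂` carrying at most `t₂ = t(A₂)` columns. On
`(w₁, w₂)` the colour of `(f, g)` is determined by the row of `f ≫ w₁` and the column of `g ≫ w₂`,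
so at most `t₁ · t₂` colours occur. For this to work `Z₂` must be chosen first, for a palette
depending on `B₁`, and `Z₁` afterwards, for a palette depending on `Z₂`.
-/

open CategoryTheory

universe v u v' u'

theorem Function.FactorsThrough.ncard_range_le {α β γ : Type*} {g : α → γ} {f : α → β}
    (hg : g.FactorsThrough f) (hf : (Set.range f).Finite) :
    (Set.range g).ncard ≤ (Set.range f).ncard := by
  have := hf.to_subtype
  rw [← Nat.card_coe_set_eq, ← Nat.card_coe_set_eq]
  refine Nat.card_le_card_of_surjective
    (fun b : Set.range f => ⟨g b.2.choose, Set.mem_range_self _⟩) ?_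
  rintro ⟨_, a, rfl⟩
  exact ⟨⟨f a, Set.mem_range_self a⟩, Subtype.ext (hg (Set.mem_range_self a).choose_spec)⟩

def IsRamseyBound (C : Type u) [Category.{v} C] (A : C) (t : ℕ) : Prop :=
  ∀ k : ℕ, 2 ≤ k → ∀ B : C, ∃ Z : C, RamseyArrow C A B Z k t

section Ramsey

variable {C : Type u} [Category.{v} C]

theorem IsRamseyBound.exists_of_finite {A : C} {t : ℕ} (h : IsRamseyBound C A t)
    (α : Type*) [Finite α] (B : C) :
    ∃ Z : C, ∀ χ : (A ⟶ Z) → α, ∃ w : B ⟶ Z,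
      (Set.range fun f : A ⟶ B => χ (f ≫ w)).ncard ≤ t := by
  obtain ⟨Z, hZ⟩ := h (max 2 (Nat.card α)) (le_max_left _ _) B
  let e : α ↪ Fin (max 2 (Nat.card α)) :=
    (Finite.equivFin α).toEmbedding.trans (Fin.castLEEmb (le_max_right _ _))
  refine ⟨Z, fun χ => ?_⟩
  obtain ⟨w, hw⟩ := hZ fun a => e (χ a)
  refine ⟨w, ?_⟩
  rwa [Set.range_comp', Set.ncard_image_of_injective _ e.injective] at hw

theorem ramseyDeg_le {A : C} {t : ℕ} (ht : 1 ≤ t) (h : IsRamseyBound C A t) :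
    ramseyDeg C A ≤ t :=
  sInf_le ⟨t, rfl, ht, h⟩

theorem exists_ramseyDeg_eq_of_ne_top {A : C} (h : ramseyDeg C A ≠ ⊤) :
    ∃ t : ℕ, ramseyDeg C A = t ∧ 1 ≤ t ∧ IsRamseyBound C A t := by
  have hne : {n : ℕ∞ | ∃ t : ℕ, n = t ∧ 1 ≤ t ∧ IsRamseyBound C A t}.Nonempty :=
    Set.nonempty_iff_ne_empty.2 fun hempty => h ((congrArg sInf hempty).trans sInf_empty)
  exact csInf_mem hne

end Ramsey

theorem IsRamseyBound.prod {C₁ : Type u} [Category.{v} C₁] {C₂ : Type u'} [Category.{v'} C₂]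
    {A₁ : C₁} {A₂ : C₂} {t₁ t₂ : ℕ} [∀ B : C₁, Finite (A₁ ⟶ B)] [∀ B : C₂, Finite (A₂ ⟶ B)]
    (h₁ : IsRamseyBound C₁ A₁ t₁) (h₂ : IsRamseyBound C₂ A₂ t₂) :
    IsRamseyBound (C₁ × C₂) (A₁, A₂) (t₁ * t₂) := by
  rintro k - ⟨B₁, B₂⟩
  obtain ⟨Z₂, hZ₂⟩ := h₂.exists_of_finite ((A₁ ⟶ B₁) → Fin k) B₂
  obtain ⟨Z₁, hZ₁⟩ := h₁.exists_of_finite ((A₂ ⟶ Z₂) → Fin k) B₁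
  refine ⟨(Z₁, Z₂), fun χ => ?_⟩
  obtain ⟨w₁, hw₁⟩ := hZ₁ fun f g => χ (f, g)
  obtain ⟨w₂, hw₂⟩ := hZ₂ fun g f => χ (f ≫ w₁, g)
  refine ⟨(w₁, w₂), ?_⟩
  have hfactors : (fun p : (A₁, A₂) ⟶ (B₁, B₂) => χ (p ≫ (w₁, w₂))).FactorsThrough
      (Prod.map (fun f g => χ (f ≫ w₁, g)) (fun g f => χ (f ≫ w₁, g ≫ w₂))) := by
    rintro ⟨f, g⟩ ⟨f', g'⟩ hfg
    obtain ⟨hrow, hcol⟩ := Prod.mk.inj hfg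
    exact (congrFun hrow (g ≫ w₂)).trans (congrFun hcol f')
  calc _ ≤ _ := hfactors.ncard_range_le (Set.toFinite _)
    _ = _ := by rw [Set.range_prodMap, Set.ncard_prod]
    _ ≤ t₁ * t₂ := Nat.mul_le_mul hw₁ hw₂

theorem stmt2_general {C₁ : Type u} [Category.{v} C₁] {C₂ : Type u'} [Category.{v'} C₂]
    (hfin₁ : ∀ X Y : C₁, Finite (X ⟶ Y)) (hfin₂ : ∀ X Y : C₂, Finite (X ⟶ Y))
    (hdeg₁ : ∀ X : C₁, ramseyDeg C₁ X ≠ ⊤) (hdeg₂ : ∀ X : C₂, ramseyDeg C₂ X ≠ ⊤)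
    (A₁ : C₁) (A₂ : C₂) :
    ramseyDeg (C₁ × C₂) (A₁, A₂) ≤ ramseyDeg C₁ A₁ * ramseyDeg C₂ A₂ := by
  obtain ⟨t₁, hdeg_eq₁, ht₁, hbound₁⟩ := exists_ramseyDeg_eq_of_ne_top (hdeg₁ A₁)
  obtain ⟨t₂, hdeg_eq₂, ht₂, hbound₂⟩ := exists_ramseyDeg_eq_of_ne_top (hdeg₂ A₂)
  have := hfin₁ A₁
  have := hfin₂ A₂
  rw [hdeg_eq₁, hdeg_eq₂, ← Nat.cast_mul]
  exact ramseyDeg_le (Nat.mul_le_mul ht₁ ht₂) (hbound₁.prod hbound₂)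

theorem stmt2 {C₁ : Type u} [Category.{v} C₁] {C₂ : Type u'} [Category.{v'} C₂]
    (hmono₁ : ∀ {X Y : C₁} (f : X ⟶ Y), Mono f)
    (hmono₂ : ∀ {X Y : C₂} (f : X ⟶ Y), Mono f)
    (hfin₁ : ∀ X Y : C₁, Finite (X ⟶ Y)) (hfin₂ : ∀ X Y : C₂, Finite (X ⟶ Y))
    (hdeg₁ : ∀ X : C₁, ramseyDeg C₁ X ≠ ⊤) (hdeg₂ : ∀ X : C₂, ramseyDeg C₂ X ≠ ⊤)
    (A₁ : C₁) (A₂ : C₂) :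
    ramseyDeg (C₁ × C₂) (A₁, A₂) ≤ ramseyDeg C₁ A₁ * ramseyDeg C₂ A₂ :=
  stmt2_general hfin₁ hfin₂ hdeg₁ hdeg₂ A₁ A₂
end

section
/- Let A be a full subcategory of C_fin and let F be an object of C which is universal and locally finite for A. For any object A of A and t ≥ 2: if t_A(A) ≤ t, then F → (B)^A_{k,t} for every k ≥ 2 and every B in A with hom(A,B) ≠ ∅. That is, the finite Ramsey degree bound transfers to colorings into the universal object F. -/
/-!
Since `t_𝒜(A) ≤ t`, for every `k` and `B` there is some `Z ∈ 𝒜` with `Z → (B)^A_{k,t}` in `𝒜`.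
Universality gives a morphism `u : Z ⟶ F`; a colouring `χ` of `hom(A, F)` pulls back along `u`
to a colouring of `hom(A, Z)`, and if `w : B ⟶ Z` sees at most `t` colours of the pulled-back
colouring, then `w ≫ u` sees at most `t` colours of `χ`, because `𝒜` is full in `C`.
-/

open CategoryTheory

universe v u v' u'

def SatisfiesC (C : Type u) [Category.{v} C] (Cfin : Set C) : Prop :=
  (∀ {X Y : C} (f : X ⟶ Y), Mono f) ∧
  (∀ A B : C, A ∈ Cfin → B ∈ Cfin → Finite (A ⟶ B)) ∧
  (∀ F : C, ∃ A : C, A ∈ Cfin ∧ Nonempty (A ⟶ F)) ∧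
  (∀ B : C, B ∈ Cfin → {A : C | A ∈ Cfin ∧ Nonempty (A ⟶ B)}.Finite)

def UniversalFor (C : Type u) [Category.{v} C] (F : C) (S : Set C) : Prop :=
  ∀ A ∈ S, Nonempty (A ⟶ F)

def LocallyFiniteFor (C : Type u) [Category.{v} C] (F : C) (S : Set C) : Prop :=
  ∀ (A B : C), A ∈ S → B ∈ S → ∀ (e : A ⟶ F) (f : B ⟶ F),
    ∃ D₀ : C, D₀ ∈ S ∧ ∃ (r : D₀ ⟶ F) (p : A ⟶ D₀) (q : B ⟶ D₀),
      p ≫ r = e ∧ q ≫ r = f ∧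
      ∀ (H : C) (r' : H ⟶ F) (p' : A ⟶ H) (q' : B ⟶ H),
        p' ≫ r' = e → q' ≫ r' = f →
        ∃ s : D₀ ⟶ H, s ≫ r' = r ∧ p ≫ s = p' ∧ q ≫ s = q'

namespace RamseyArrow

variable {C : Type u} [Category.{v} C]

theorem mono {A B Z : C} {k m t : ℕ} (h : RamseyArrow C A B Z k m) (hmt : m ≤ t) :
    RamseyArrow C A B Z k t := fun χ =>
  (h χ).imp fun _ hw => hw.trans hmt

theorem map_of_full {D : Type u'} [Category.{v'} D] (G : D ⥤ C) [G.Full]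
    {A B Z : D} {F : C} {k t : ℕ} (u : G.obj Z ⟶ F) (h : RamseyArrow D A B Z k t) :
    RamseyArrow C (G.obj A) (G.obj B) F k t := by
  intro χ
  obtain ⟨w, hw⟩ := h fun g => χ (G.map g ≫ u)
  refine ⟨G.map w ≫ u, le_of_eq_of_le (congrArg Set.ncard ?_) hw⟩
  ext c
  constructor
  · rintro ⟨f, rfl⟩
    exact ⟨G.preimage f, by simp⟩
  · rintro ⟨g, rfl⟩
    exact ⟨G.map g, by simp⟩

end RamseyArrow

theorem exists_ramseyArrow_of_ramseyDeg_le {C : Type u} [Category.{v} C] {A : C} {t : ℕ}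
    (h : ramseyDeg C A ≤ t) :
    ∃ m ≤ t, ∀ k : ℕ, 2 ≤ k → ∀ B : C, ∃ Z : C, RamseyArrow C A B Z k m := by
  set S : Set ℕ∞ := {n : ℕ∞ | ∃ m : ℕ, n = (m : ℕ∞) ∧ 1 ≤ m ∧
    ∀ k : ℕ, 2 ≤ k → ∀ B : C, ∃ Z : C, RamseyArrow C A B Z k m}
  have hS : S.Nonempty := by
    by_contra hS
    rw [Set.not_nonempty_iff_eq_empty] at hS
    simp [ramseyDeg, S, hS] at h
  obtain ⟨m, hm, -, hram⟩ : sInf S ∈ S := csInf_mem hS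
  have hmt : (m : ℕ∞) ≤ t := hm ▸ (h : sInf S ≤ t)
  exact ⟨m, by exact_mod_cast hmt, hram⟩

theorem stmt3_general {C : Type u} [Category.{v} C] (Afin : Set C)
    (F : C) (huniv : UniversalFor C F Afin)
    (A : C) (hA : A ∈ Afin) (t : ℕ)
    (hdeg : ramseyDeg (ObjectProperty.FullSubcategory fun X : C => X ∈ Afin) ⟨A, hA⟩ ≤ (t : ℕ∞)) :
    ∀ k : ℕ, 2 ≤ k → ∀ B : C, B ∈ Afin → Nonempty (A ⟶ B) →
      RamseyArrow C A B F k t := by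
  intro k hk B hB _
  obtain ⟨m, hmt, hram⟩ := exists_ramseyArrow_of_ramseyDeg_le hdeg
  obtain ⟨Z, hZ⟩ := hram k hk ⟨B, hB⟩
  obtain ⟨u⟩ := huniv Z.obj Z.property
  exact (hZ.map_of_full (ObjectProperty.ι _) u).mono hmt

theorem stmt3 {C : Type u} [Category.{v} C] (Cfin Afin : Set C)
    (hsat : SatisfiesC C Cfin) (hsub : Afin ⊆ Cfin)
    (F : C) (huniv : UniversalFor C F Afin) (hlf : LocallyFiniteFor C F Afin)
    (A : C) (hA : A ∈ Afin) (t : ℕ) (ht : 2 ≤ t)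
    (hdeg : ramseyDeg (ObjectProperty.FullSubcategory fun X : C => X ∈ Afin) ⟨A, hA⟩ ≤ (t : ℕ∞)) :
    ∀ k : ℕ, 2 ≤ k → ∀ B : C, B ∈ Afin → Nonempty (A ⟶ B) →
      RamseyArrow C A B F k t :=
  stmt3_general Afin F huniv A hA t hdeg
end

section
/- Let A be a full subcategory of C_fin and let F be an object of C which is universal and locally finite for A. For any object A of A and t ≥ 2: if F → (B)^A_{k,t} for all k ≥ 2 and all B in A with hom(A,B) ≠ ∅, then t_A(A) ≤ t. (Proved by a compactness argument on the space of colorings k^{hom(A,F)}.) -/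
open CategoryTheory

universe v u v' u'

/-!
Suppose every `D ∈ Afin` over `F` admitted a coloring of `hom(A, D)` with more than `t` colors
on every copy of `B`; extending it along the mono `D ⟶ F` gives a coloring of `hom(A, F)` that is
bad on `D`. Colorings of `hom(A, F)` form a compact space, the sets of colorings bad on a given
`D ⟶ F` are closed (as `hom(A, B)` is finite) and directed (as `F` is locally finite), so some
coloring of `hom(A, F)` is bad on every `D ⟶ F`, contradicting `F → (B)^A_{k,t}` at `D = B`.
-/

namespace CategoryTheory

variable {C : Type u} [Category.{v} C]

def HasCopyWithFewColors {K : Type*} {A D : C} (B : C) (t : ℕ) (c : (A ⟶ D) → K) : Prop :=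
  ∃ w : B ⟶ D, (Set.range fun f : A ⟶ B => c (f ≫ w)).ncard ≤ t

theorem ramseyArrow_self_of_isEmpty {A B : C} [IsEmpty (A ⟶ B)] (k t : ℕ) :
    RamseyArrow C A B B k t :=
  fun _ => ⟨𝟙 B, by simp [Set.range_eq_empty]⟩

theorem Functor.FullyFaithful.ramseyArrow_of_map {D : Type u'} [Category.{v'} D] {G : D ⥤ C}
    (hG : G.FullyFaithful) {A B Z : D} {k t : ℕ}
    (h : RamseyArrow C (G.obj A) (G.obj B) (G.obj Z) k t) : RamseyArrow D A B Z k t := by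
  intro χ
  obtain ⟨w, hw⟩ := h (χ ∘ hG.preimage)
  refine ⟨hG.preimage w, le_trans (Set.ncard_le_ncard ?_ (Set.toFinite _)) hw⟩
  rintro _ ⟨f, rfl⟩
  exact ⟨G.map f, by simp⟩

theorem HasCopyWithFewColors.of_comp {K : Type*} {A D D' B : C} {t : ℕ} {c : (A ⟶ D') → K}
    (u : D ⟶ D') (h : HasCopyWithFewColors B t fun g => c (g ≫ u)) :
    HasCopyWithFewColors B t c := by
  obtain ⟨w, hw⟩ := h
  exact ⟨w ≫ u, by simpa only [Category.assoc] using hw⟩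

section Compactness

variable {K : Type*} {A B F : C} {t : ℕ}

def badColorings (B : C) (t : ℕ) {D : C} (r : D ⟶ F) : Set ((A ⟶ F) → K) :=
  {χ | ¬ HasCopyWithFewColors B t fun g : A ⟶ D => χ (g ≫ r)}

theorem badColorings_subset_comp {D D' : C} (u : D ⟶ D') (r : D' ⟶ F) :
    (badColorings B t r : Set ((A ⟶ F) → K)) ⊆ badColorings B t (u ≫ r) := by
  intro χ hχ hcopy
  exact hχ (HasCopyWithFewColors.of_comp u (by simpa only [Category.assoc] using hcopy))

theorem isClosed_badColorings [TopologicalSpace K] [DiscreteTopology K] [Finite (A ⟶ B)]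
    {D : C} (r : D ⟶ F) : IsClosed (badColorings B t r : Set ((A ⟶ F) → K)) := by
  have hrestrict (w : B ⟶ D) :
      Continuous fun (χ : (A ⟶ F) → K) (f : A ⟶ B) => χ ((f ≫ w) ≫ r) :=
    continuous_pi fun f => continuous_apply _
  simp only [badColorings, HasCopyWithFewColors, not_exists, not_le, Set.ofPred_forall]
  exact isClosed_iInter fun w =>
    (isClosed_discrete {c : (A ⟶ B) → K | t < (Set.range c).ncard}).preimage (hrestrict w)

theorem nonempty_badColorings [Nonempty K] {D : C} (r : D ⟶ F) [Mono r] {c : (A ⟶ D) → K}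
    (hc : ¬ HasCopyWithFewColors B t c) : (badColorings B t r : Set ((A ⟶ F) → K)).Nonempty := by
  have hinj : Function.Injective fun g : A ⟶ D => g ≫ r := fun _ _ => (cancel_mono r).mp
  refine ⟨Function.extend (fun g : A ⟶ D => g ≫ r) c fun _ => Classical.arbitrary K, ?_⟩
  simpa only [badColorings, Set.mem_ofPred_eq, hinj.extend_apply] using hc

theorem directed_badColorings {S : Set C} (hlf : LocallyFiniteFor C F S) :
    Directed (· ⊇ ·) fun i : (D : S) × (D.1 ⟶ F) =>
      (badColorings B t i.2 : Set ((A ⟶ F) → K)) := by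
  rintro ⟨⟨D₁, hD₁⟩, r₁⟩ ⟨⟨D₂, hD₂⟩, r₂⟩
  obtain ⟨D, hD, r, p, q, rfl, rfl, -⟩ := hlf D₁ D₂ hD₁ hD₂ r₁ r₂
  exact ⟨⟨⟨D, hD⟩, r⟩, badColorings_subset_comp p r, badColorings_subset_comp q r⟩

theorem exists_hasCopyWithFewColors_of_locallyFinite [TopologicalSpace K] [DiscreteTopology K]
    [Finite K] [Nonempty K] [Finite (A ⟶ B)] {S : Set C} (hlf : LocallyFiniteFor C F S)
    (hmono : ∀ {D : C} (r : D ⟶ F), Mono r) (hB : B ∈ S)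
    (hF : ∀ χ : (A ⟶ F) → K, HasCopyWithFewColors B t χ) :
    ∃ D ∈ S, ∀ c : (A ⟶ D) → K, HasCopyWithFewColors B t c := by
  by_contra! hbad
  obtain ⟨w₀, -⟩ := hF fun _ => Classical.arbitrary K
  have : Nonempty ((D : S) × (D.1 ⟶ F)) := ⟨⟨⟨B, hB⟩, w₀⟩⟩
  obtain ⟨χ, hχ⟩ := IsCompact.nonempty_iInter_of_directed_nonempty_isCompact_isClosed
    (fun i : (D : S) × (D.1 ⟶ F) => (badColorings B t i.2 : Set ((A ⟶ F) → K)))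
    (directed_badColorings hlf)
    (fun ⟨⟨D, hD⟩, r⟩ =>
      have := hmono r
      let ⟨_, hc⟩ := hbad D hD
      nonempty_badColorings r hc)
    (fun i => (isClosed_badColorings i.2).isCompact)
    (fun i => isClosed_badColorings i.2)
  obtain ⟨w, hw⟩ := hF χ
  exact Set.mem_iInter.mp hχ ⟨⟨B, hB⟩, w⟩ ⟨𝟙 B, by simpa only [Category.comp_id] using hw⟩

end Compactness

end CategoryTheory

open CategoryTheory in
theorem stmt4_general {C : Type u} [Category.{v} C] (Cfin Afin : Set C)
    (hsat : SatisfiesC C Cfin) (hsub : Afin ⊆ Cfin)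
    (F : C) (hlf : LocallyFiniteFor C F Afin)
    (A : C) (hA : A ∈ Afin) (t : ℕ) (ht : 2 ≤ t)
    (harrow : ∀ k : ℕ, 2 ≤ k → ∀ B : C, B ∈ Afin → Nonempty (A ⟶ B) →
      RamseyArrow C A B F k t) :
    ramseyDeg (ObjectProperty.FullSubcategory fun X : C => X ∈ Afin) ⟨A, hA⟩ ≤ (t : ℕ∞) := by
  refine sInf_le ⟨t, rfl, by omega, fun k hk B => ?_⟩
  by_cases hAB : Nonempty (A ⟶ B.obj)
  · have : Finite (A ⟶ B.obj) := hsat.2.1 A B.obj (hsub hA) (hsub B.property)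
    have : NeZero k := ⟨by omega⟩
    obtain ⟨D, hD, hDB⟩ := exists_hasCopyWithFewColors_of_locallyFinite hlf hsat.1 B.property
      (harrow k hk B.obj B.property hAB)
    exact ⟨⟨D, hD⟩, (ObjectProperty.fullyFaithfulι _).ramseyArrow_of_map hDB⟩
  · have : IsEmpty ((⟨A, hA⟩ : ObjectProperty.FullSubcategory fun X : C => X ∈ Afin) ⟶ B) :=
      ⟨fun g => hAB ⟨g.hom⟩⟩
    exact ⟨B, ramseyArrow_self_of_isEmpty k t⟩

theorem stmt4 {C : Type u} [Category.{v} C] (Cfin Afin : Set C)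
    (hsat : SatisfiesC C Cfin) (hsub : Afin ⊆ Cfin)
    (F : C) (huniv : UniversalFor C F Afin) (hlf : LocallyFiniteFor C F Afin)
    (A : C) (hA : A ∈ Afin) (t : ℕ) (ht : 2 ≤ t)
    (harrow : ∀ k : ℕ, 2 ≤ k → ∀ B : C, B ∈ Afin → Nonempty (A ⟶ B) →
      RamseyArrow C A B F k t) :
    ramseyDeg (ObjectProperty.FullSubcategory fun X : C => X ∈ Afin) ⟨A, hA⟩ ≤ (t : ℕ∞) :=
  stmt4_general Cfin Afin hsat hsub F hlf A hA t ht harrow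
end

section
/- Let A be a full subcategory of C_fin, F an object of C universal and locally finite for A, A an object of A, and t ≥ 2. The condition 'F → (B)^A_{<ω,t} for all B in A with A → B' is equivalent to: for every such B there is a coloring λ : hom(A,B) → t which is essential at B, meaning that for every coloring χ : hom(A,F) → k there is w ∈ hom(B,F) with ker λ ⊆ ker χ^{(w)}, where χ^{(w)}(f) = χ(w∘f). -/
open CategoryTheory

universe v u v' u'

def EssentialAt (C : Type u) [Category.{v} C] (F A B : C) {t : ℕ}
    (lam : (A ⟶ B) → Fin t) : Prop :=
  ∀ (k : ℕ) (χ : (A ⟶ F) → Fin k), ∃ w : B ⟶ F,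
    ∀ f g : A ⟶ B, lam f = lam g → χ (f ≫ w) = χ (g ≫ w)

/-!
If `λ` is essential at `B`, every coloring of `hom(A, F)` seen through a suitable copy `w` of
`B` is a coarsening of `λ`, hence takes at most `t` values. Conversely, if no `λ : hom(A, B) → t`
were essential, choose for each of the finitely many `λ` a coloring `χ_λ` witnessing this, and
encode the tuple `(χ_λ)_λ` as one coloring `χ` with finitely many colors. The arrow gives a
`w` on which `χ (- ≫ w)` takes at most `t` values; reading these values as a coloring `λ` of
`hom(A, B)` makes `χ_λ (- ≫ w)` a coarsening of `λ`, contradicting the choice of `χ_λ`.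
-/

open Function Set

section Colorings

variable {α β γ : Type*}

theorem ncard_range_le_of_factorsThrough [Finite γ] {h : α → β} {l : α → γ}
    (hf : h.FactorsThrough l) : (range h).ncard ≤ (range l).ncard := by
  rcases isEmpty_or_nonempty α with _ | ⟨⟨a⟩⟩
  · simp [range_eq_empty]
  · have hfac : extend l h (fun _ => h a) ∘ l = h := funext (hf.extend_apply _)
    rw [← hfac, range_comp]
    exact ncard_image_le (toFinite _)

theorem exists_fin_factorsThrough_of_ncard_range_le [Finite β] {h : α → β} {t : ℕ}
    (ht : (range h).ncard ≤ t) : ∃ l : α → Fin t, h.FactorsThrough l := by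
  obtain ⟨m, ⟨e⟩⟩ := Finite.exists_equiv_fin (range h)
  have hm : m ≤ t := by rwa [← Nat.card_coe_set_eq, Nat.card_eq_of_equiv_fin e] at ht
  refine ⟨fun a => Fin.castLE hm (e ⟨h a, mem_range_self a⟩), fun a b hab => ?_⟩
  exact congrArg Subtype.val (e.injective (Fin.castLE_injective hm hab))

theorem exists_fin_coloring_refining_pi {ι : Type*} [Finite ι] {k : ι → ℕ}
    (c : ∀ i, α → Fin (k i)) :
    ∃ n, 2 ≤ n ∧ ∃ χ : α → Fin n, ∀ i, (c i).FactorsThrough χ := by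
  obtain ⟨n, ⟨e⟩⟩ := Finite.exists_equiv_fin (∀ i, Fin (k i))
  refine ⟨max 2 n, le_max_left _ _, fun a => Fin.castLE (le_max_right 2 n) (e fun i => c i a),
    fun i a b hab => ?_⟩
  exact congrFun (e.injective (Fin.castLE_injective _ hab)) i

end Colorings

section Essential

variable {C : Type u} [Category.{v} C] {F A B : C} {t : ℕ}

theorem EssentialAt.ramseyArrow {lam : (A ⟶ B) → Fin t} (hlam : EssentialAt C F A B lam)
    (k : ℕ) : RamseyArrow C A B F k t := by
  intro χ
  obtain ⟨w, hw⟩ := hlam k χ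
  refine ⟨w, (ncard_range_le_of_factorsThrough fun f g => hw f g).trans ?_⟩
  exact (ncard_le_card _).trans (Nat.card_fin t).le

theorem exists_essentialAt_of_ramseyArrow [Finite (A ⟶ B)]
    (h : ∀ k, 2 ≤ k → RamseyArrow C A B F k t) :
    ∃ lam : (A ⟶ B) → Fin t, EssentialAt C F A B lam := by
  by_contra! hnone
  simp only [EssentialAt, not_forall, not_exists] at hnone
  choose k c hc using hnone
  obtain ⟨n, hn, χ, hχ⟩ := exists_fin_coloring_refining_pi c
  obtain ⟨w, hw⟩ := h n hn χ
  obtain ⟨lam, hlam⟩ := exists_fin_factorsThrough_of_ncard_range_le hw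
  obtain ⟨f, g, hfg, hne⟩ := hc lam w
  exact hne (hχ lam (hlam hfg))

end Essential

theorem stmt5_general {C : Type u} [Category.{v} C] (Cfin Afin : Set C)
    (hsat : SatisfiesC C Cfin) (hsub : Afin ⊆ Cfin)
    (F : C)
    (A : C) (hA : A ∈ Afin) (t : ℕ) :
    (∀ k : ℕ, 2 ≤ k → ∀ B : C, B ∈ Afin → Nonempty (A ⟶ B) →
        RamseyArrow C A B F k t) ↔
    (∀ B : C, B ∈ Afin → Nonempty (A ⟶ B) →
        ∃ lam : (A ⟶ B) → Fin t, EssentialAt C F A B lam) := by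
  constructor
  · intro h B hB hAB
    have : Finite (A ⟶ B) := hsat.2.1 A B (hsub hA) (hsub hB)
    exact exists_essentialAt_of_ramseyArrow fun k hk => h k hk B hB hAB
  · intro h k _ B hB hAB
    obtain ⟨lam, hlam⟩ := h B hB hAB
    exact hlam.ramseyArrow k

theorem stmt5 {C : Type u} [Category.{v} C] (Cfin Afin : Set C)
    (hsat : SatisfiesC C Cfin) (hsub : Afin ⊆ Cfin)
    (F : C) (huniv : UniversalFor C F Afin) (hlf : LocallyFiniteFor C F Afin)
    (A : C) (hA : A ∈ Afin) (t : ℕ) (ht : 2 ≤ t) :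
    (∀ k : ℕ, 2 ≤ k → ∀ B : C, B ∈ Afin → Nonempty (A ⟶ B) →
        RamseyArrow C A B F k t) ↔
    (∀ B : C, B ∈ Afin → Nonempty (A ⟶ B) →
        ∃ lam : (A ⟶ B) → Fin t, EssentialAt C F A B lam) :=
  stmt5_general Cfin Afin hsat hsub F A hA t
end

section
/- Let A be a full subcategory of C_fin and F an object of C universal and locally finite for A. Let A be an object of A and t ≥ 2. If for every B in A with hom(A,B) ≠ ∅ there is a coloring λ_B : hom(A,B) → t essential at B, then there exists an essential coloring γ : hom(A,F) → t, i.e. a coloring such that for every B in A with A → B and every w ∈ hom(B,F), the induced coloring γ^{(w)} : hom(A,B) → t (f ↦ γ(w∘f)) is essential at B. -/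
open CategoryTheory

universe v u v' u'

theorem stmt6 {C : Type u} [Category.{v} C] (Cfin Afin : Set C)
    (hsat : SatisfiesC C Cfin) (hsub : Afin ⊆ Cfin)
    (F : C) (huniv : UniversalFor C F Afin) (hlf : LocallyFiniteFor C F Afin)
    (A : C) (hA : A ∈ Afin) (t : ℕ) (ht : 2 ≤ t)
    (hess : ∀ B : C, B ∈ Afin → Nonempty (A ⟶ B) →
      ∃ lam : (A ⟶ B) → Fin t, EssentialAt C F A B lam) :
    ∃ γ : (A ⟶ F) → Fin t,
      ∀ B : C, B ∈ Afin → Nonempty (A ⟶ B) → ∀ w : B ⟶ F,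
        EssentialAt C F A B (fun f => γ (f ≫ w)) := by
  classical
  obtain ⟨hmono, hfin, -, -⟩ := hsat
  haveI : ∀ {X Y : C} (f : X ⟶ Y), Mono f := hmono
  letI : TopologicalSpace (Fin t) := ⊥
  haveI : DiscreteTopology (Fin t) := ⟨rfl⟩
  have ht0 : 0 < t := by omega
  -- the family of closed constraints, indexed by pairs (B, w)
  let Z : (Σ B : C, (B ⟶ F)) → Set ((A ⟶ F) → Fin t) := fun i =>
    if i.1 ∈ Afin ∧ Nonempty (A ⟶ i.1) then
      {γ | ∃ μ : (A ⟶ i.1) → Fin t, EssentialAt C F A i.1 μ ∧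
        ∀ f g : A ⟶ i.1, γ (f ≫ i.2) = γ (g ≫ i.2) → μ f = μ g}
    else Set.univ
  have hZclosed : ∀ i, IsClosed (Z i) := by
    rintro ⟨B, w⟩
    by_cases hB : B ∈ Afin ∧ Nonempty (A ⟶ B)
    · simp only [Z, if_pos hB]
      rw [← isOpen_compl_iff, isOpen_iff_forall_mem_open]
      intro γ hγ
      refine ⟨{γ' | ∀ f : A ⟶ B, γ' (f ≫ w) = γ (f ≫ w)}, ?_, ?_, fun f => rfl⟩
      · intro γ' hγ' hmem
        refine hγ ?_
        obtain ⟨μ, hμ, hker⟩ := hmem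
        exact ⟨μ, hμ, fun f g h => hker f g (by rw [← hγ' f, ← hγ' g] at h; exact h)⟩
      · haveI := hfin A B (hsub hA) (hsub hB.1)
        have heq : {γ' : (A ⟶ F) → Fin t | ∀ f : A ⟶ B, γ' (f ≫ w) = γ (f ≫ w)}
            = ⋂ f : A ⟶ B, {γ' | γ' (f ≫ w) = γ (f ≫ w)} := by
          ext x; simp [Set.mem_iInter]
        rw [heq]
        refine isOpen_iInter_of_finite fun f => ?_
        have : {γ' : (A ⟶ F) → Fin t | γ' (f ≫ w) = γ (f ≫ w)}
            = (fun γ' : (A ⟶ F) → Fin t => γ' (f ≫ w)) ⁻¹' {γ (f ≫ w)} := rfl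
        rw [this]
        exact (continuous_apply (f ≫ w)).isOpen_preimage _ (isOpen_discrete _)
    · simp only [Z, if_neg hB]
      exact isClosed_univ
  have hFIP : ∀ s : Finset (Σ B : C, (B ⟶ F)),
      (Set.univ ∩ ⋂ i ∈ s, Z i).Nonempty := by
    intro s
    have key : ∃ D, D ∈ Afin ∧ Nonempty (A ⟶ D) ∧ ∃ r : D ⟶ F,
        ∀ i ∈ s, i.1 ∈ Afin → ∃ u : i.1 ⟶ D, u ≫ r = i.2 := by
      induction s using Finset.induction with
      | empty =>
        obtain ⟨e⟩ := huniv A hA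
        exact ⟨A, hA, ⟨𝟙 A⟩, e, by simp⟩
      | @insert a s' ha ih =>
        obtain ⟨D, hD, hAD, r, hr⟩ := ih
        by_cases haf : a.1 ∈ Afin
        · obtain ⟨D', hD', r', p, q, hpr, hqr, -⟩ := hlf D a.1 hD haf r a.2
          refine ⟨D', hD', ⟨hAD.some ≫ p⟩, r', ?_⟩
          intro i hi hiA
          rcases Finset.mem_insert.mp hi with h | h
          · subst h; exact ⟨q, hqr⟩
          · obtain ⟨u, hu⟩ := hr i h hiA
            exact ⟨u ≫ p, by rw [Category.assoc, hpr, hu]⟩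
        · refine ⟨D, hD, hAD, r, ?_⟩
          intro i hi hiA
          rcases Finset.mem_insert.mp hi with h | h
          · subst h; exact absurd hiA haf
          · exact hr i h hiA
    obtain ⟨D, hD, hAD, r, hr⟩ := key
    obtain ⟨lam, hlam⟩ := hess D hD hAD
    refine ⟨fun e =>
      if h : ∃ p : A ⟶ D, p ≫ r = e then lam h.choose else ⟨0, ht0⟩,
      Set.mem_univ _, ?_⟩
    set γ : (A ⟶ F) → Fin t := fun e =>
      if h : ∃ p : A ⟶ D, p ≫ r = e then lam h.choose else ⟨0, ht0⟩ with hγdef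
    rw [Set.mem_iInter₂]
    intro i hi
    by_cases hB : i.1 ∈ Afin ∧ Nonempty (A ⟶ i.1)
    · simp only [Z, if_pos hB]
      obtain ⟨u, hu⟩ := hr i hi hB.1
      have hγ : ∀ f : A ⟶ i.1, γ (f ≫ i.2) = lam (f ≫ u) := by
        intro f
        have hex : ∃ p : A ⟶ D, p ≫ r = f ≫ i.2 :=
          ⟨f ≫ u, by rw [Category.assoc, hu]⟩
        have hspec := hex.choose_spec
        have heq : hex.choose = f ≫ u := by
          haveI := hmono r
          rw [← cancel_mono r, hspec, Category.assoc, hu]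
        simp only [γ, dif_pos hex, heq]
      refine ⟨fun f => lam (f ≫ u), ?_, ?_⟩
      · intro k χ
        obtain ⟨v, hv⟩ := hlam k χ
        refine ⟨u ≫ v, fun f g h => ?_⟩
        have := hv (f ≫ u) (g ≫ u) h
        simpa only [Category.assoc] using this
      · intro f g h
        rw [hγ f, hγ g] at h; exact h
    · simp only [Z, if_neg hB]; trivial
  obtain ⟨γ, -, hγ⟩ :=
    isCompact_univ.inter_iInter_nonempty Z hZclosed hFIP
  refine ⟨γ, ?_⟩
  intro B hB hAB w
  have hmem : γ ∈ Z ⟨B, w⟩ := Set.mem_iInter.mp hγ ⟨B, w⟩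
  simp only [Z, if_pos (⟨hB, hAB⟩ : B ∈ Afin ∧ Nonempty (A ⟶ B))] at hmem
  obtain ⟨μ, hμ, hker⟩ := hmem
  intro k χ
  obtain ⟨w', hw'⟩ := hμ k χ
  exact ⟨w', fun f g h => hw' f g (hker f g h)⟩
end

section
/- Let F be a locally finite object of C whose automorphisms are finitely separated. Then Aut(F) endowed with the topology τ_F generated by the base { N_F(e₁,e₂) } is a Hausdorff topological group: the topology is Hausdorff, inversion is continuous, and composition is continuous. -/
open CategoryTheory

universe v u v' u'

def NF (C : Type u) [Category.{v} C] (F : C) {A : C} (e₁ e₂ : A ⟶ F) : Set (Aut F) :=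
  {g : Aut F | e₁ ≫ g.hom = e₂}

def tauF (C : Type u) [Category.{v} C] (Cfin : Set C) (F : C) : TopologicalSpace (Aut F) :=
  TopologicalSpace.generateFrom
    {S : Set (Aut F) | ∃ A ∈ Cfin, ∃ e₁ e₂ : A ⟶ F, S = NF C F e₁ e₂}

def FinitelySeparated (C : Type u) [Category.{v} C] (Cfin : Set C) (F : C) : Prop :=
  ∀ f g : Aut F, f ≠ g → ∃ A ∈ Cfin, ∃ e : A ⟶ F, e ≫ f.hom ≠ e ≫ g.hom

namespace NF

variable {C : Type u} [Category.{v} C] {F A : C}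

theorem mul_mem {e₁ e₂ e₃ : A ⟶ F} {g h : Aut F} (hh : h ∈ NF C F e₁ e₂)
    (hg : g ∈ NF C F e₂ e₃) : g * h ∈ NF C F e₁ e₃ := by
  change e₁ ≫ h.hom ≫ g.hom = e₃
  rw [← Category.assoc, hh, hg]

theorem inv_mem_iff {e₁ e₂ : A ⟶ F} {g : Aut F} : g⁻¹ ∈ NF C F e₁ e₂ ↔ g ∈ NF C F e₂ e₁ := by
  change e₁ ≫ g.inv = e₂ ↔ e₂ ≫ g.hom = e₁
  exact (Iso.comp_inv_eq g).trans eq_comm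

theorem self_comp_mem (e : A ⟶ F) (g : Aut F) : g ∈ NF C F e (e ≫ g.hom) := rfl

end NF

section tauF

variable {C : Type u} [Category.{v} C] (Cfin : Set C) (F : C)

theorem isOpen_NF {A : C} (hA : A ∈ Cfin) (e₁ e₂ : A ⟶ F) :
    @IsOpen (Aut F) (tauF C Cfin F) (NF C F e₁ e₂) :=
  TopologicalSpace.GenerateOpen.basic _ ⟨A, hA, e₁, e₂, rfl⟩

theorem t2Space_tauF (hsep : FinitelySeparated C Cfin F) : @T2Space (Aut F) (tauF C Cfin F) := by
  let _ := tauF C Cfin F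
  refine ⟨fun f g hfg => ?_⟩
  obtain ⟨A, hA, e, he⟩ := hsep f g hfg
  refine ⟨_, _, isOpen_NF Cfin F hA e (e ≫ f.hom), isOpen_NF Cfin F hA e (e ≫ g.hom),
    NF.self_comp_mem e f, NF.self_comp_mem e g, Set.disjoint_left.mpr ?_⟩
  intro k hkf hkg
  exact he (hkf.symm.trans hkg)

theorem isTopologicalGroup_tauF : @IsTopologicalGroup (Aut F) (tauF C Cfin F) _ := by
  let _ := tauF C Cfin F
  refine { continuous_mul := ?_, continuous_inv := ?_ }
  · refine continuous_generateFrom_iff.mpr ?_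
    rintro _ ⟨A, hA, e₁, e₂, rfl⟩
    rw [isOpen_prod_iff]
    rintro g h (hgh : g * h ∈ NF C F e₁ e₂)
    -- `g * h` sends `e₁` to `e₂` through `e₁ ≫ h.hom`, and so does every pair agreeing with `(g, h)` there.
    refine ⟨NF C F (e₁ ≫ h.hom) e₂, NF C F e₁ (e₁ ≫ h.hom), isOpen_NF Cfin F hA _ _,
      isOpen_NF Cfin F hA _ _, ?_, NF.self_comp_mem e₁ h, ?_⟩
    · change (e₁ ≫ h.hom) ≫ g.hom = e₂
      rw [Category.assoc]
      exact hgh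
    · rintro ⟨g', h'⟩ ⟨hg', hh'⟩
      exact NF.mul_mem hh' hg'
  · refine continuous_generateFrom_iff.mpr ?_
    rintro _ ⟨A, hA, e₁, e₂, rfl⟩
    have hpre : (fun g : Aut F => g⁻¹) ⁻¹' NF C F e₁ e₂ = NF C F e₂ e₁ :=
      Set.ext fun _ => NF.inv_mem_iff
    rw [hpre]
    exact isOpen_NF Cfin F hA e₂ e₁

end tauF

theorem stmt8_general {C : Type u} [Category.{v} C] (Cfin : Set C)
    (F : C) (hsep : FinitelySeparated C Cfin F) :
    @T2Space (Aut F) (tauF C Cfin F) ∧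
    @IsTopologicalGroup (Aut F) (tauF C Cfin F) inferInstance :=
  ⟨t2Space_tauF Cfin F hsep, isTopologicalGroup_tauF Cfin F⟩

theorem stmt8 {C : Type u} [Category.{v} C] (Cfin : Set C)
    (hsat : SatisfiesC C Cfin) (F : C) (hlf : LocallyFiniteFor C F Cfin)
    (hsep : FinitelySeparated C Cfin F) :
    @T2Space (Aut F) (tauF C Cfin F) ∧
    @IsTopologicalGroup (Aut F) (tauF C Cfin F) inferInstance :=
  stmt8_general Cfin F hsep
end

section
/- Let F be a homogeneous locally finite object in C which is universal for C_fin. If C_fin has the Ramsey property, then for every k ≥ 2, every A ∈ C_fin, every e ∈ hom(A,F), every finite subset H of G = Aut(F), and every k-coloring f̄ : G → k which is constant on left cosets of the stabilizer G_(e) = { g ∈ G : g∘e = e }, there exists g ∈ G such that f̄ is constant on g·H. -/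
/-!
Pull the colouring `fbar` back to a colouring `χ` of `hom(A, F)` via `g ↦ e ≫ g`, which is
well defined because `fbar` is constant on the cosets of the stabiliser of `e`. By local
finiteness the finitely many embeddings `e ≫ h`, `h ∈ H`, all factor through a single
`r : B ⟶ F` with `B` finite. The Ramsey property gives `Z` and `w : B ⟶ Z` on which the
colouring `f ↦ χ (f ≫ eZ)` of `hom(A, Z)` is constant, for any embedding `eZ : Z ⟶ F`.
Homogeneity yields `g` with `r ≫ g = w ≫ eZ`, and then every `fbar (h ≫ g)` is a colour of
`hom(A, B) ≫ w`, hence they all agree.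
-/

open CategoryTheory

universe v u v' u'

def Homogeneous (C : Type u) [Category.{v} C] (Cfin : Set C) (F : C) : Prop :=
  ∀ A ∈ Cfin, ∀ e₁ e₂ : A ⟶ F, ∃ g : Aut F, e₁ ≫ g.hom = e₂

def RamseyProperty (C : Type u) [Category.{v} C] (Cfin : Set C) : Prop :=
  ∀ k : ℕ, 2 ≤ k → ∀ A ∈ Cfin, ∀ B ∈ Cfin, ∃ Z ∈ Cfin, RamseyArrow C A B Z k 1

theorem RamseyArrow.exists_forall_comp_eq {C : Type u} [Category.{v} C] {A B Z : C} {k : ℕ}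
    (h : RamseyArrow C A B Z k 1) (χ : (A ⟶ Z) → Fin k) :
    ∃ w : B ⟶ Z, ∀ f f' : A ⟶ B, χ (f ≫ w) = χ (f' ≫ w) := by
  obtain ⟨w, hw⟩ := h χ
  exact ⟨w, fun f f' => (Set.ncard_le_one (Set.toFinite _)).mp hw _ ⟨f, rfl⟩ _ ⟨f', rfl⟩⟩

theorem LocallyFiniteFor.exists_factor_of_finite {C : Type u} [Category.{v} C] {F : C}
    {Cfin : Set C} (hlf : LocallyFiniteFor C F Cfin) {A : C} (hA : A ∈ Cfin) (e : A ⟶ F)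
    (S : Set (A ⟶ F)) (hS : S.Finite) :
    ∃ B ∈ Cfin, ∃ r : B ⟶ F, ∀ u ∈ S, ∃ p : A ⟶ B, p ≫ r = u := by
  induction S, hS using Set.Finite.induction_on with
  | empty => exact ⟨A, hA, e, fun _ hu => absurd hu (Set.notMem_empty _)⟩
  | @insert a S _ _ ih =>
    obtain ⟨B, hB, r, hr⟩ := ih
    obtain ⟨D, hD, s, p, q, hp, hq, -⟩ := hlf A B hA hB a r
    refine ⟨D, hD, s, ?_⟩
    rintro u (rfl | hu)
    · exact ⟨p, hp⟩
    · obtain ⟨p', hp'⟩ := hr u hu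
      exact ⟨p' ≫ q, by rw [Category.assoc, hq, hp']⟩

theorem stmt9_general {C : Type u} [Category.{v} C] (Cfin : Set C)
    (F : C)
    (hhom : Homogeneous C Cfin F) (hlf : LocallyFiniteFor C F Cfin)
    (huniv : UniversalFor C F Cfin) (hram : RamseyProperty C Cfin) :
    ∀ k : ℕ, 2 ≤ k → ∀ A : C, A ∈ Cfin → ∀ e : A ⟶ F,
      ∀ H : Set (Aut F), H.Finite →
      ∀ fbar : Aut F → Fin k,
        (∀ g g' : Aut F, e ≫ g.hom = e ≫ g'.hom → fbar g = fbar g') →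
        ∃ g : Aut F, ∀ h ∈ H, ∀ h' ∈ H, fbar (h ≪≫ g) = fbar (h' ≪≫ g) := by
  intro k hk A hA e H hH fbar hconst
  let χ := Function.extend (fun g : Aut F => e ≫ g.hom) fbar fun _ => fbar (Iso.refl F)
  have hχ (g : Aut F) : χ (e ≫ g.hom) = fbar g :=
    Function.FactorsThrough.extend_apply (fun g g' => hconst g g') _ g
  obtain ⟨B, hB, r, hr⟩ :=
    hlf.exists_factor_of_finite hA e ((fun h : Aut F => e ≫ h.hom) '' H) (hH.image _)
  obtain ⟨Z, hZ, hZram⟩ := hram k hk A hA B hB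
  obtain ⟨eZ⟩ := huniv Z hZ
  obtain ⟨w, hw⟩ := hZram.exists_forall_comp_eq fun f => χ (f ≫ eZ)
  obtain ⟨g, hg⟩ := hhom B hB r (w ≫ eZ)
  have hcolour (h : Aut F) (hh : h ∈ H) : ∃ p : A ⟶ B, fbar (h ≪≫ g) = χ ((p ≫ w) ≫ eZ) := by
    obtain ⟨p, hp : p ≫ r = e ≫ h.hom⟩ := hr _ ⟨h, hh, rfl⟩
    have hcomp : e ≫ (h ≪≫ g).hom = (p ≫ w) ≫ eZ := by
      change e ≫ h.hom ≫ g.hom = _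
      rw [← Category.assoc, ← hp, Category.assoc, hg, Category.assoc]
    exact ⟨p, (hχ (h ≪≫ g)).symm.trans (congrArg χ hcomp)⟩
  refine ⟨g, fun h hh h' hh' => ?_⟩
  obtain ⟨p, hp⟩ := hcolour h hh
  obtain ⟨p', hp'⟩ := hcolour h' hh'
  rw [hp, hp', hw p p']

theorem stmt9 {C : Type u} [Category.{v} C] (Cfin : Set C)
    (hsat : SatisfiesC C Cfin) (F : C)
    (hhom : Homogeneous C Cfin F) (hlf : LocallyFiniteFor C F Cfin)
    (huniv : UniversalFor C F Cfin) (hram : RamseyProperty C Cfin) :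
    ∀ k : ℕ, 2 ≤ k → ∀ A : C, A ∈ Cfin → ∀ e : A ⟶ F,
      ∀ H : Set (Aut F), H.Finite →
      ∀ fbar : Aut F → Fin k,
        (∀ g g' : Aut F, e ≫ g.hom = e ≫ g'.hom → fbar g = fbar g') →
        ∃ g : Aut F, ∀ h ∈ H, ∀ h' ∈ H, fbar (h ≪≫ g) = fbar (h' ≪≫ g) :=
  stmt9_general Cfin F hhom hlf huniv hram
end

section
/- Let U : C* → C be an expansion with unique restrictions, let A be an object of C, 𝒜 ∈ U⁻¹(A), and let {𝒜ᵢ : i ∈ I} be all objects of C* isomorphic to 𝒜 lying in U⁻¹(A). Then Aut_C(A) is the disjoint union over i ∈ I of iso_{C*}(𝒜ᵢ, 𝒜). Consequently, if I and Aut_C(A) are finite then |Aut_C(A)| = |I| · |Aut_{C*}(𝒜)|. -/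
open CategoryTheory

universe v u v' u'

variable {C : Type u} [Category.{v} C] {D : Type u'} [Category.{v'} D]

def InHom (U : D ⥤ C) {A : C} (X Y : D) (h : U.obj X = A) (e : A ⟶ U.obj Y) : Prop :=
  ∃ f : X ⟶ Y, U.map f = eqToHom h ≫ e

def ObjSurjective (U : D ⥤ C) : Prop := ∀ A : C, ∃ X : D, U.obj X = A

def HomInjective (U : D ⥤ C) : Prop :=
  ∀ (X Y : D) (f g : X ⟶ Y), U.map f = U.map g → f = g

def HasUniqueRestrictions (U : D ⥤ C) : Prop :=
  ∀ (Y : D) (A : C) (e : A ⟶ U.obj Y),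
    ∃! X : {Z : D // U.obj Z = A}, InHom U X.1 Y X.2 e

def Reasonable (U : D ⥤ C) : Prop :=
  ∀ (A B : C) (e : A ⟶ B) (X : D) (h : U.obj X = A),
    ∃ (Y : D) (h' : U.obj Y = B) (f : X ⟶ Y),
      U.map f = eqToHom h ≫ e ≫ eqToHom h'.symm


/-!
An isomorphism `ψ : A ≅ U Y` has a unique restriction `X` above `A`, and its lift `f : X ⟶ Y`
is invertible: the restriction of `ψ⁻¹` along `X` composes with `f` to a lift of the identity of
`U Y`, so by uniqueness of restrictions its source is `Y`, and faithfulness makes it inverse to `f`.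
Hence `iso_C(A, U Y)` is the disjoint union of the `iso_{C*}(X, Y)` over the `X` above `A`, and
each nonempty summand is in bijection with `Aut Y`.
-/

namespace HasUniqueRestrictions

variable {U : D ⥤ C}

theorem isIso_of_map_eq (hinj : HomInjective U) (hur : HasUniqueRestrictions U)
    {A : C} {X Y : D} (hX : U.obj X = A) (e : A ⟶ U.obj Y) [IsIso e] (f : X ⟶ Y)
    (hf : U.map f = eqToHom hX ≫ e) : IsIso f := by
  obtain ⟨⟨Y', hY'⟩, ⟨g, hg⟩, -⟩ := hur X (U.obj Y) (inv e ≫ eqToHom hX.symm)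
  have hgf : U.map (g ≫ f) = eqToHom hY' ≫ 𝟙 _ := by simp [hg, hf]
  -- `g ≫ f` and `𝟙 Y` both lie over the identity of `U.obj Y`, so `Y'` is the restriction `Y`.
  obtain rfl : Y' = Y := congrArg Subtype.val <|
    (hur Y (U.obj Y) (𝟙 _)).unique (y₁ := ⟨Y', hY'⟩) (y₂ := ⟨Y, rfl⟩) ⟨g ≫ f, hgf⟩ ⟨𝟙 Y, by simp⟩
  refine ⟨g, hinj _ _ _ _ ?_, hinj _ _ _ _ ?_⟩
  · simp [hg, hf]
  · simpa using hgf

theorem existsUnique_iso_map_eq (hinj : HomInjective U) (hur : HasUniqueRestrictions U)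
    {A : C} {Y : D} (ψ : A ≅ U.obj Y) :
    ∃! p : {X : D // U.obj X = A}, ∃ e : p.1 ≅ Y, U.map e.hom = eqToHom p.2 ≫ ψ.hom := by
  obtain ⟨p, ⟨f, hf⟩, huniq⟩ := hur Y A ψ.hom
  have := isIso_of_map_eq hinj hur p.2 ψ.hom f hf
  exact ⟨p, ⟨asIso f, hf⟩, fun q ⟨e, he⟩ => huniq q ⟨e.hom, he⟩⟩

noncomputable def sigmaIsoEquiv (hinj : HomInjective U) (hur : HasUniqueRestrictions U)
    (A : C) (Y : D) : (Σ p : {X : D // U.obj X = A}, p.1 ≅ Y) ≃ (A ≅ U.obj Y) :=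
  Equiv.ofBijective (fun q => eqToIso q.1.2.symm ≪≫ U.mapIso q.2) <| by
    constructor
    · rintro ⟨⟨X, hX⟩, e⟩ ⟨⟨X', hX'⟩, e'⟩ hee'
      have hmap : U.map e.hom = eqToHom hX ≫ eqToHom hX'.symm ≫ U.map e'.hom := by
        simpa using congrArg (eqToHom hX ≫ ·.hom) hee'
      obtain rfl : X = X' := congrArg Subtype.val <|
        (hur Y A (eqToHom hX'.symm ≫ U.map e'.hom)).unique
          (y₁ := ⟨X, hX⟩) (y₂ := ⟨X', hX'⟩) ⟨e.hom, hmap⟩ ⟨e'.hom, by simp⟩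
      obtain rfl : e = e' := Iso.ext <| hinj _ _ _ _ <| by simpa using hmap
      rfl
    · intro ψ
      obtain ⟨p, ⟨e, he⟩, -⟩ := existsUnique_iso_map_eq hinj hur ψ
      exact ⟨⟨p, e⟩, Iso.ext <| by simp [he]⟩

end HasUniqueRestrictions

noncomputable def sigmaIsoEquivProdAut {ι : Type*} (F : ι → D) (Y : D) :
    (Σ i, F i ≅ Y) ≃ {i // Nonempty (F i ≅ Y)} × Aut Y where
  toFun q := (⟨q.1, ⟨q.2⟩⟩, (Nonempty.intro q.2).some.symm ≪≫ q.2)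
  invFun q := ⟨q.1.1, q.1.2.some ≪≫ q.2⟩
  left_inv q := by simp
  right_inv q := Prod.ext rfl <| Iso.symm_self_id_assoc q.1.2.some (q.2 : Y ≅ Y)

theorem stmt13_general (U : D ⥤ C)
    (hinj : HomInjective U)
    (hur : HasUniqueRestrictions U)
    (A : C) (X₀ : D) (hX₀ : U.obj X₀ = A) :
    (∀ φ : Aut A, ∃! p : {X : D // U.obj X = A},
        ∃ e : p.1 ≅ X₀, U.map e.hom = eqToHom p.2 ≫ φ.hom ≫ eqToHom hX₀.symm) ∧
    (Finite {X : D // U.obj X = A ∧ Nonempty (X ≅ X₀)} → Finite (Aut A) →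
      Nat.card (Aut A) =
        Nat.card {X : D // U.obj X = A ∧ Nonempty (X ≅ X₀)} * Nat.card (Aut X₀)) := by
  refine ⟨fun φ => hur.existsUnique_iso_map_eq hinj (φ ≪≫ eqToIso hX₀.symm), fun _ _ => ?_⟩
  have hAut : Aut A ≃ {X : D // U.obj X = A ∧ Nonempty (X ≅ X₀)} × Aut X₀ :=
    (Iso.isoCongrRight (eqToIso hX₀.symm)).trans <| (hur.sigmaIsoEquiv hinj A X₀).symm.trans <|
      (sigmaIsoEquivProdAut Subtype.val X₀).trans <|
        (Equiv.subtypeSubtypeEquivSubtypeInter (U.obj · = A) (Nonempty <| · ≅ X₀)).prodCongr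
          (Equiv.refl _)
  rw [Nat.card_congr hAut, Nat.card_prod]

theorem stmt13 (U : D ⥤ C)
    (hsurj : ObjSurjective U) (hinj : HomInjective U)
    (hur : HasUniqueRestrictions U)
    (A : C) (X₀ : D) (hX₀ : U.obj X₀ = A) :
    (∀ φ : Aut A, ∃! p : {X : D // U.obj X = A},
        ∃ e : p.1 ≅ X₀, U.map e.hom = eqToHom p.2 ≫ φ.hom ≫ eqToHom hX₀.symm) ∧
    (Finite {X : D // U.obj X = A ∧ Nonempty (X ≅ X₀)} → Finite (Aut A) →
      Nat.card (Aut A) =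
        Nat.card {X : D // U.obj X = A ∧ Nonempty (X ≅ X₀)} * Nat.card (Aut X₀)) :=
  stmt13_general U hinj hur A X₀ hX₀
end

section
/- Let U : C* → C be a reasonable expansion with unique restrictions. If F is a locally finite object of C and ℱ ∈ U⁻¹(F), then ℱ is a locally finite object of C* (with respect to the induced finite subcategory C*_fin). -/
open CategoryTheory

universe v u v' u'

variable {C : Type u} [Category.{v} C] {D : Type u'} [Category.{v'} D]

lemma restr_eq (U : D ⥤ C) (hur : HasUniqueRestrictions U) {Y : D} {A : C}
    {X₁ X₂ : D} (h₁ : U.obj X₁ = A) (h₂ : U.obj X₂ = A) (e : A ⟶ U.obj Y)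
    (H₁ : InHom U X₁ Y h₁ e) (H₂ : InHom U X₂ Y h₂ e) : X₁ = X₂ := by
  obtain ⟨X, _, huniq⟩ := hur Y A e
  have e1 := huniq ⟨X₁, h₁⟩ H₁
  have e2 := huniq ⟨X₂, h₂⟩ H₂
  have : (⟨X₁, h₁⟩ : {Z : D // U.obj Z = A}) = ⟨X₂, h₂⟩ := e1.trans e2.symm
  exact congrArg Subtype.val this

theorem stmt14 (U : D ⥤ C) (Cfin : Set C)
    (hsat : SatisfiesC C Cfin)
    (hsurj : ObjSurjective U) (hinj : HomInjective U)
    (hreas : Reasonable U) (hur : HasUniqueRestrictions U)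
    (F : C) (hlf : LocallyFiniteFor C F Cfin)
    (ℱ : D) (hℱ : U.obj ℱ = F) :
    LocallyFiniteFor D ℱ {X : D | U.obj X ∈ Cfin} := by
  intro 𝒜 ℬ hA hB e f
  obtain ⟨D₀, hD₀, r, p, q, hpr, hqr, huniv⟩ :=
    hlf (U.obj 𝒜) (U.obj ℬ) hA hB (U.map e ≫ eqToHom hℱ) (U.map f ≫ eqToHom hℱ)
  have hpr' : p ≫ r ≫ eqToHom hℱ.symm = U.map e := by
    rw [← Category.assoc, hpr]; simp
  have hqr' : q ≫ r ≫ eqToHom hℱ.symm = U.map f := by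
    rw [← Category.assoc, hqr]; simp
  obtain ⟨⟨𝒟, hD⟩, ⟨ρ, hρ⟩, _⟩ := hur ℱ D₀ (r ≫ eqToHom hℱ.symm)
  -- lift p
  obtain ⟨⟨𝒜', hA'⟩, ⟨g, hg⟩, _⟩ := hur 𝒟 (U.obj 𝒜) (p ≫ eqToHom hD.symm)
  have hAeq : 𝒜' = 𝒜 := by
    refine restr_eq U hur (Y := ℱ) hA' rfl (U.map e) ⟨g ≫ ρ, ?_⟩ ⟨e, by simp⟩
    rw [U.map_comp, hg, hρ]
    simp [hpr']
  subst hAeq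
  have hUp : U.map g = p ≫ eqToHom hD.symm := by rw [hg]; simp
  -- lift q
  obtain ⟨⟨ℬ', hB'⟩, ⟨g', hg'⟩, _⟩ := hur 𝒟 (U.obj ℬ) (q ≫ eqToHom hD.symm)
  have hBeq : ℬ' = ℬ := by
    refine restr_eq U hur (Y := ℱ) hB' rfl (U.map f) ⟨g' ≫ ρ, ?_⟩ ⟨f, by simp⟩
    rw [U.map_comp, hg', hρ]
    simp [hqr']
  subst hBeq
  have hUq : U.map g' = q ≫ eqToHom hD.symm := by rw [hg']; simp
  refine ⟨𝒟, by simpa [hD] using hD₀, ρ, g, g', ?_, ?_, ?_⟩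
  · apply hinj
    rw [U.map_comp, hUp, hρ]
    simp [hpr']
  · apply hinj
    rw [U.map_comp, hUq, hρ]
    simp [hqr']
  · intro ℋ r' p' q' hp' hq'
    obtain ⟨s₀, hs₀r, hs₀p, hs₀q⟩ :=
      huniv (U.obj ℋ) (U.map r' ≫ eqToHom hℱ) (U.map p') (U.map q')
        (by rw [← U.map_comp_assoc, hp']) (by rw [← U.map_comp_assoc, hq'])
    have hs₀r' : s₀ ≫ U.map r' = r ≫ eqToHom hℱ.symm := by
      rw [← hs₀r]; simp
    obtain ⟨⟨𝒟', hD'⟩, ⟨s', hs'⟩, _⟩ := hur ℋ D₀ s₀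
    have hDeq : 𝒟' = 𝒟 := by
      refine restr_eq U hur (Y := ℱ) hD' hD (r ≫ eqToHom hℱ.symm)
        ⟨s' ≫ r', ?_⟩ ⟨ρ, hρ⟩
      rw [U.map_comp, hs', Category.assoc, hs₀r']
    subst hDeq
    refine ⟨s', ?_, ?_, ?_⟩
    · apply hinj
      rw [U.map_comp, hs', hρ, Category.assoc, hs₀r']
    · apply hinj
      rw [U.map_comp, hUp, hs', ← hs₀p]
      simp
    · apply hinj
      rw [U.map_comp, hUq, hs', ← hs₀q]
      simp
end

section
/- Let U : C* → C be a reasonable precompact expansion with unique restrictions, where C and C_fin satisfy (C1)-(C5). Let C*_fin be the full subcategory of C* spanned by ∪{U⁻¹(A) : A ∈ Ob(C_fin)}. Then C* and C*_fin also satisfy (C1)-(C5). -/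
open CategoryTheory

universe v u v' u'

variable {C : Type u} [Category.{v} C] {D : Type u'} [Category.{v'} D]

theorem stmt15 (U : D ⥤ C) (Cfin : Set C)
    (hsat : SatisfiesC C Cfin)
    (hsurj : ObjSurjective U) (hinj : HomInjective U)
    (hreas : Reasonable U) (hur : HasUniqueRestrictions U)
    (hpre : ∀ A : C, A ∈ Cfin → {X : D | U.obj X = A}.Finite) :
    SatisfiesC D {X : D | U.obj X ∈ Cfin} := by
  obtain ⟨h1, h2, h3, h4⟩ := hsat
  refine ⟨?_, ?_, ?_, ?_⟩
  · intro X Y f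
    constructor
    intro W g h hgh
    apply hinj
    have hm := h1 (U.map f)
    have : U.map g ≫ U.map f = U.map h ≫ U.map f := by
      rw [← U.map_comp, ← U.map_comp, hgh]
    exact (cancel_mono (U.map f)).mp this
  · intro X Y hX hY
    have := h2 _ _ hX hY
    exact Finite.of_injective (U.map : (X ⟶ Y) → _) (fun f g => hinj X Y f g)
  · intro Y
    obtain ⟨A, hA, ⟨e⟩⟩ := h3 (U.obj Y)
    obtain ⟨⟨X, hX⟩, ⟨f, hf⟩, _⟩ := hur Y A e
    exact ⟨X, by simpa [hX] using hA, ⟨f⟩⟩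
  · intro Y hY
    have hS := h4 (U.obj Y) hY
    have hsub : {X : D | U.obj X ∈ Cfin ∧ Nonempty (X ⟶ Y)} ⊆
        ⋃ A ∈ {A : C | A ∈ Cfin ∧ Nonempty (A ⟶ U.obj Y)}, {X : D | U.obj X = A} := by
      rintro X ⟨hX, ⟨f⟩⟩
      exact Set.mem_biUnion ⟨hX, ⟨U.map f⟩⟩ rfl
    exact (Set.Finite.biUnion hS (fun A hA => hpre A hA.1)).subset hsub
end

section
/- Let U : C* → C be a reasonable expansion with unique restrictions, F a homogeneous locally finite object of C, and G = Aut(F). Then for ℱ, ℱ' ∈ U⁻¹(F): ℱ' lies in the closure of the orbit ℱ^G (in the topology σ_F on U⁻¹(F)) if and only if Age(ℱ') ⊆ Age(ℱ). -/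
open CategoryTheory

universe v u v' u'

variable {C : Type u} [Category.{v} C] {D : Type u'} [Category.{v'} D]

def ExpHom (U : D ⥤ C) {F : C} (φ : F ⟶ F)
    (X Y : {Z : D // U.obj Z = F}) : Prop :=
  ∃ f : X.1 ⟶ Y.1, U.map f = eqToHom X.2 ≫ φ ≫ eqToHom Y.2.symm

def NExp (U : D ⥤ C) (F : C) (X : D) (e : U.obj X ⟶ F) :
    Set {Z : D // U.obj Z = F} :=
  {Y | ∃ f : X ⟶ Y.1, U.map f = e ≫ eqToHom Y.2.symm}

def sigmaF (U : D ⥤ C) (Cfin : Set C) (F : C) :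
    TopologicalSpace {Z : D // U.obj Z = F} :=
  TopologicalSpace.generateFrom
    {S | ∃ X : D, U.obj X ∈ Cfin ∧ ∃ e : U.obj X ⟶ F, S = NExp U F X e}

def AgeExp (U : D ⥤ C) (Cfin : Set C) (Y : D) : Set D :=
  {X : D | U.obj X ∈ Cfin ∧ Nonempty (X ⟶ Y)}

lemma nexp_subset_aux (U : D ⥤ C) (hur : HasUniqueRestrictions U) (F : C)
    (x : {Z : D // U.obj Z = F}) {X₁ : D} {e₁ : U.obj X₁ ⟶ F}
    (w₁ : X₁ ⟶ x.1) (hw₁ : U.map w₁ = e₁ ≫ eqToHom x.2.symm)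
    {Xd : D} {D₀ : C} (hX : U.obj Xd = D₀) (r : D₀ ⟶ F)
    (p : U.obj X₁ ⟶ D₀) (hp : p ≫ r = e₁)
    (h : Xd ⟶ x.1) (hh : U.map h = (eqToHom hX ≫ r) ≫ eqToHom x.2.symm) :
    NExp U F Xd (eqToHom hX ≫ r) ⊆ NExp U F X₁ e₁ := by
  obtain ⟨Z, ⟨f', hf'⟩, _⟩ := hur Xd (U.obj X₁) (p ≫ eqToHom hX.symm)
  obtain ⟨W, _, hWu⟩ := hur x.1 (U.obj X₁) (e₁ ≫ eqToHom x.2.symm)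
  have h1 : Z = W := by
    apply hWu
    refine ⟨f' ≫ h, ?_⟩
    rw [Functor.map_comp, hf', hh]
    simp only [Category.assoc, eqToHom_trans_assoc, eqToHom_refl, Category.id_comp]
    rw [← Category.assoc p r, hp]
  have h2 : (⟨X₁, rfl⟩ : {Z : D // U.obj Z = U.obj X₁}) = W := by
    apply hWu
    exact ⟨w₁, by simp [hw₁]⟩
  have h3 : Z = (⟨X₁, rfl⟩ : {Z : D // U.obj Z = U.obj X₁}) := h1.trans h2.symm
  have heq : Z.1 = X₁ := congrArg Subtype.val h3
  have k : X₁ ⟶ Xd := eqToHom heq.symm ≫ f'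
  have hk : U.map (eqToHom heq.symm ≫ f') = p ≫ eqToHom hX.symm := by
    rw [Functor.map_comp, hf', eqToHom_map]
    simp
  rintro y ⟨m, hm⟩
  refine ⟨(eqToHom heq.symm ≫ f') ≫ m, ?_⟩
  rw [Functor.map_comp, hk, hm]
  simp only [Category.assoc, eqToHom_trans_assoc, eqToHom_refl, Category.id_comp]
  rw [← Category.assoc p r, hp]

lemma basis_lemma (U : D ⥤ C) (Cfin : Set C)
    (hC3 : ∀ G : C, ∃ A : C, A ∈ Cfin ∧ Nonempty (A ⟶ G))
    (hur : HasUniqueRestrictions U)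
    (F : C) (hlf : LocallyFiniteFor C F Cfin)
    (o : Set {Z : D // U.obj Z = F})
    (ho : TopologicalSpace.GenerateOpen
      {S | ∃ X : D, U.obj X ∈ Cfin ∧ ∃ e : U.obj X ⟶ F, S = NExp U F X e} o) :
    ∀ x ∈ o, ∃ (X : D) (e : U.obj X ⟶ F),
      U.obj X ∈ Cfin ∧ x ∈ NExp U F X e ∧ NExp U F X e ⊆ o := by
  induction ho with
  | basic s hs =>
    intro x hx
    obtain ⟨X, hX, e, rfl⟩ := hs
    exact ⟨X, e, hX, hx, subset_rfl⟩
  | univ =>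
    intro x _
    obtain ⟨A, hA, ⟨e0⟩⟩ := hC3 F
    obtain ⟨Z, ⟨f, hf⟩, _⟩ := hur x.1 A (e0 ≫ eqToHom x.2.symm)
    refine ⟨Z.1, eqToHom Z.2 ≫ e0, by rw [Z.2]; exact hA, ⟨f, by rw [hf]; simp⟩,
      fun _ _ => trivial⟩
  | inter s t _ _ ihs iht =>
    intro x hx
    obtain ⟨X₁, e₁, hX₁, ⟨w₁, hw₁⟩, hsub₁⟩ := ihs x hx.1
    obtain ⟨X₂, e₂, hX₂, ⟨w₂, hw₂⟩, hsub₂⟩ := iht x hx.2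
    obtain ⟨D₀, hD₀, r, p, q, hp, hq, -⟩ := hlf (U.obj X₁) (U.obj X₂) hX₁ hX₂ e₁ e₂
    obtain ⟨Z, ⟨f, hf⟩, _⟩ := hur x.1 D₀ (r ≫ eqToHom x.2.symm)
    refine ⟨Z.1, eqToHom Z.2 ≫ r, by rw [Z.2]; exact hD₀,
      ⟨f, by rw [hf]; simp⟩, fun y hy => ⟨?_, ?_⟩⟩
    · exact hsub₁ (nexp_subset_aux U hur F x w₁ hw₁ Z.2 r p hp f
        (by rw [hf]; simp) hy)
    · exact hsub₂ (nexp_subset_aux U hur F x w₂ hw₂ Z.2 r q hq f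
        (by rw [hf]; simp) hy)
  | sUnion S _ ih =>
    rintro x ⟨ts, hts, hxts⟩
    obtain ⟨X, e, hX, hmem, hsub⟩ := ih ts hts x hxts
    exact ⟨X, e, hX, hmem, hsub.trans (Set.subset_sUnion_of_mem hts)⟩

theorem stmt17 (U : D ⥤ C) (Cfin : Set C)
    (hsat : SatisfiesC C Cfin)
    (hsurj : ObjSurjective U) (hinj : HomInjective U)
    (hreas : Reasonable U) (hur : HasUniqueRestrictions U)
    (F : C) (hhom : Homogeneous C Cfin F) (hlf : LocallyFiniteFor C F Cfin)
    (act : {Z : D // U.obj Z = F} → Aut F → {Z : D // U.obj Z = F})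
    (hact : ∀ (X : {Z : D // U.obj Z = F}) (g : Aut F),
      ExpHom U (g⁻¹).hom X (act X g))
    (ℱ ℱ' : {Z : D // U.obj Z = F}) :
    ℱ' ∈ @closure _ (sigmaF U Cfin F) {X | ∃ g : Aut F, act ℱ g = X} ↔
      AgeExp U Cfin ℱ'.1 ⊆ AgeExp U Cfin ℱ.1 := by
  letI : TopologicalSpace {Z : D // U.obj Z = F} := sigmaF U Cfin F
  constructor
  · rintro hcl 𝒜 ⟨h𝒜, ⟨f⟩⟩
    set N := NExp U F 𝒜 (U.map f ≫ eqToHom ℱ'.2) with hN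
    have hNopen : IsOpen N :=
      TopologicalSpace.GenerateOpen.basic _ ⟨𝒜, h𝒜, _, rfl⟩
    have hmemN : ℱ' ∈ N := ⟨f, by simp⟩
    obtain ⟨y, hyN, g, hg⟩ := mem_closure_iff.mp hcl N hNopen hmemN
    subst hg
    obtain ⟨m, hm⟩ := hyN
    obtain ⟨f₀, hf₀⟩ := hact ℱ g
    set z := act (act ℱ g) g⁻¹ with hz
    obtain ⟨f₁, hf₁⟩ := hact (act ℱ g) g⁻¹
    obtain ⟨W, _, hWu⟩ := hur z.1 F (eqToHom z.2.symm)
    have h1 : ℱ = W := by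
      apply hWu
      refine ⟨f₀ ≫ f₁, ?_⟩
      rw [Functor.map_comp, hf₀, hf₁]
      simp only [Category.assoc, eqToHom_trans_assoc, eqToHom_refl, Category.id_comp,
        inv_inv]
      rw [← Category.assoc (g⁻¹).hom g.hom]
      have : (g⁻¹).hom ≫ g.hom = 𝟙 F := g.inv_hom_id
      rw [this]
      simp
    have h2 : z = W := by
      apply hWu
      exact ⟨𝟙 z.1, by simp⟩
    have h3 : z.1 = ℱ.1 := congrArg Subtype.val (h2.trans h1.symm)
    exact ⟨h𝒜, ⟨m ≫ f₁ ≫ eqToHom h3⟩⟩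
  · intro hage
    rw [mem_closure_iff]
    intro o ho hmemo
    have ho' : TopologicalSpace.GenerateOpen
        {S | ∃ X : D, U.obj X ∈ Cfin ∧ ∃ e : U.obj X ⟶ F, S = NExp U F X e} o := ho
    obtain ⟨X, e, hXfin, ⟨w, hw⟩, hsub⟩ :=
      basis_lemma U Cfin hsat.2.2.1 hur F hlf o ho' ℱ' hmemo
    obtain ⟨-, ⟨mF⟩⟩ := hage (⟨hXfin, ⟨w⟩⟩ : X ∈ AgeExp U Cfin ℱ'.1)
    obtain ⟨g', hg'⟩ := hhom (U.obj X) hXfin (U.map mF ≫ eqToHom ℱ.2) e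
    obtain ⟨f₀, hf₀⟩ := hact ℱ g'⁻¹
    refine ⟨act ℱ g'⁻¹, hsub ⟨mF ≫ f₀, ?_⟩, g'⁻¹, rfl⟩
    rw [Functor.map_comp, hf₀, inv_inv]
    rw [← hg']
    simp
end
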